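/- arXiv:1201.0118 — 6 statements merged into one kernel-verified Lean document; each statement's English description precedes it below -/
import Mathlib

section
/- If G is a family preserving rooted graph, then G is spherically symmetric: for every n and every pair of vertices x, y in the sphere S_n of radius n around the root, there exists a rooted graph automorphism τ of G with τ(x) = y. -/
open SimpleGraph Matrix

attribute [local instance] Classical.propDecidable

/-- A rooted graph: connected, locally finite simple graph with a distinguished root.
The finiteness of spheres is a consequence of connectedness and local finiteness,
recorded here as a field for convenience. -/
structure RootedGraph (V : Type*) where
  G : SimpleGraph V
  o : V
  connected : G.Connected
  locFin : ∀ v : V, (G.neighborSet v).Finite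
  sphereFin : ∀ n : ℕ, {v : V | G.dist o v = n}.Finite

namespace RootedGraph

variable {V : Type*} (R : RootedGraph V)

/-- The sphere of radius `n` around the root. -/
def sphere (n : ℕ) : Set V := {v : V | R.G.dist R.o v = n}

noncomputable instance (n : ℕ) : Fintype ↥(R.sphere n) := (R.sphereFin n).fintype

/-- A k-forward path from `x` to `y` (both in sphere `n`): a path of length `2k`
going up `k` spheres and then back down, encoded as a function `ℕ → V`
that is constantly `y` from index `2k` on. -/
def IsForwardPath (n k : ℕ) (x y : V) (p : ℕ → V) : Prop :=
  p 0 = x ∧ (∀ j, 2*k ≤ j → p j = y) ∧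
  (∀ j, j < 2*k → R.G.Adj (p j) (p (j+1))) ∧
  (∀ j, j ≤ k → p j ∈ R.sphere (n + j)) ∧
  (∀ j, k ≤ j → j ≤ 2*k → p j ∈ R.sphere (n + (2*k - j)))

/-- A k-backward path from `x` to `y` (both in sphere `n`): a path of length `2k`
going down `k` spheres (so `k ≤ n`) and then back up. -/
def IsBackwardPath (n k : ℕ) (x y : V) (p : ℕ → V) : Prop :=
  k ≤ n ∧ p 0 = x ∧ (∀ j, 2*k ≤ j → p j = y) ∧
  (∀ j, j < 2*k → R.G.Adj (p j) (p (j+1))) ∧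
  (∀ j, j ≤ k → p j ∈ R.sphere (n - j)) ∧
  (∀ j, k ≤ j → j ≤ 2*k → p j ∈ R.sphere (n - (2*k - j)))

/-- Number of (k,ℓ)-forward-backward paths from `x` to `y`. -/
noncomputable def fbCount (n k l : ℕ) (x y : V) : ℕ :=
  Nat.card {pq : (ℕ → V) × (ℕ → V) //
    R.IsForwardPath n k x (pq.1 (2*k)) pq.1 ∧
    R.IsBackwardPath n l (pq.1 (2*k)) y pq.2}

/-- Number of (ℓ,k)-backward-forward paths from `x` to `y`. -/
noncomputable def bfCount (n l k : ℕ) (x y : V) : ℕ :=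
  Nat.card {pq : (ℕ → V) × (ℕ → V) //
    R.IsBackwardPath n l x (pq.1 (2*l)) pq.1 ∧
    R.IsForwardPath n k (pq.1 (2*l)) y pq.2}

/-- Number of tailed-k-forward paths from `x` to `y`. -/
noncomputable def tailedFCount (n k : ℕ) (x y : V) : ℕ :=
  Nat.card {p : ℕ → V // R.IsForwardPath n k x (p (2*k)) p ∧ R.G.Adj (p (2*k)) y}

/-- Number of headed-k-forward paths from `x` to `y`. -/
noncomputable def headedFCount (n k : ℕ) (x y : V) : ℕ :=
  Nat.card {p : ℕ → V // R.G.Adj x (p 0) ∧ R.IsForwardPath n k (p 0) y p}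

/-- Number of tailed-k-backward paths from `x` to `y`. -/
noncomputable def tailedBCount (n k : ℕ) (x y : V) : ℕ :=
  Nat.card {p : ℕ → V // R.IsBackwardPath n k x (p (2*k)) p ∧ R.G.Adj (p (2*k)) y}

/-- Number of headed-k-backward paths from `x` to `y`. -/
noncomputable def headedBCount (n k : ℕ) (x y : V) : ℕ :=
  Nat.card {p : ℕ → V // R.G.Adj x (p 0) ∧ R.IsBackwardPath n k (p 0) y p}

/-- Path commuting rooted graph. -/
def PathCommuting : Prop :=
  ∀ n : ℕ, ∀ x ∈ R.sphere n, ∀ y ∈ R.sphere n, ∀ k l : ℕ,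
    R.fbCount n k l x y = R.bfCount n l k x y ∧
    R.tailedFCount n k x y = R.headedFCount n k x y ∧
    R.tailedBCount n k x y = R.headedBCount n k x y

/-- Family preserving rooted graph. -/
def FamilyPreserving : Prop :=
  (∀ n : ℕ, ∀ x ∈ R.sphere n, ∀ y ∈ R.sphere n, ∀ z ∈ R.sphere (n+1),
    R.G.Adj x z → R.G.Adj y z →
    ∃ τ : R.G ≃g R.G, τ R.o = R.o ∧ τ x = y ∧
      ∀ j : ℕ, 1 ≤ j → ∀ v ∈ R.sphere (n+j), τ v = v) ∧
  (∀ n : ℕ, 1 ≤ n → ∀ x ∈ R.sphere n, ∀ y ∈ R.sphere n, ∀ z ∈ R.sphere (n-1),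
    R.G.Adj x z → R.G.Adj y z →
    ∃ τ : R.G ≃g R.G, τ R.o = R.o ∧ τ x = y ∧
      ∀ j : ℕ, 1 ≤ j → j ≤ n → ∀ v ∈ R.sphere (n-j), τ v = v) ∧
  (∀ n : ℕ, ∀ x ∈ R.sphere n, ∀ y ∈ R.sphere n, R.G.Adj x y →
    ∃ γ : R.G ≃g R.G, γ R.o = R.o ∧ γ x = y ∧ γ y = x)

/-- The 0-1 edge matrix between spheres `j` and `j+1`. -/
noncomputable def Esub (j : ℕ) : Matrix ↥(R.sphere (j+1)) ↥(R.sphere j) ℕ :=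
  fun u v => if R.G.Adj u.1 v.1 then 1 else 0

/-- The adjacency matrix of the subgraph induced on sphere `n`. -/
noncomputable def Vsub (n : ℕ) : Matrix ↥(R.sphere n) ↥(R.sphere n) ℕ :=
  fun u v => if R.G.Adj u.1 v.1 then 1 else 0

/-- The product `E_{m+l-1} ⋯ E_{m+1} E_m` of edge matrices (identity for `l = 0`). -/
noncomputable def chainProd (m : ℕ) : (l : ℕ) → Matrix ↥(R.sphere (m + l)) ↥(R.sphere m) ℕ
  | 0 => (1 : Matrix ↥(R.sphere m) ↥(R.sphere m) ℕ)
  | l+1 => R.Esub (m+l) * chainProd m l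

/-- `Λ_{n,+k} = E_n^T ⋯ E_{n+k-1}^T E_{n+k-1} ⋯ E_n`, which counts `k`-forward paths. -/
noncomputable def lamPlus (n k : ℕ) : Matrix ↥(R.sphere n) ↥(R.sphere n) ℕ :=
  (R.chainProd n k)ᵀ * R.chainProd n k

/-- `Λ_{m+l,-l} = E_{m+l-1} ⋯ E_m E_m^T ⋯ E_{m+l-1}^T`, which counts `l`-backward paths. -/
noncomputable def lamMinus (m l : ℕ) : Matrix ↥(R.sphere (m + l)) ↥(R.sphere (m + l)) ℕ :=
  R.chainProd m l * (R.chainProd m l)ᵀ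

/-- `Λ_{n,-j}`, defined as the identity when `j > n`. -/
noncomputable def lamMinusAll : (n j : ℕ) → Matrix ↥(R.sphere n) ↥(R.sphere n) ℕ
  | _, 0 => 1
  | 0, _+1 => 1
  | n+1, j+1 => if j + 1 ≤ n + 1 then R.Esub n * lamMinusAll n j * (R.Esub n)ᵀ else 1

/-- The graph Laplacian acting on real-valued functions. -/
noncomputable def lap (φ : V → ℝ) (x : V) : ℝ :=
  ∑ᶠ y ∈ R.G.neighborSet x, (φ x - φ y)

/-- An antitree: two vertices are adjacent iff their distances to the root differ by one. -/
def IsAntitree : Prop :=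
  ∀ x y : V, R.G.Adj x y ↔
    (R.G.dist R.o x + 1 = R.G.dist R.o y ∨ R.G.dist R.o y + 1 = R.G.dist R.o x)

/-- The set `Z^{k,ℓ}_{x,y}` of vertices in sphere `n` reachable from `x` by a `k`-forward
path and from `y` by an `ℓ`-backward path. -/
def Zset (n k l : ℕ) (x y : V) : Set V :=
  {z | z ∈ R.sphere n ∧ (∃ p, R.IsForwardPath n k x z p) ∧ (∃ q, R.IsBackwardPath n l y z q)}

end RootedGraph


section Aux

lemma aux_iso_dist_le {V : Type*} {G : SimpleGraph V} (g : G ≃g G) (a b : V) :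
    G.dist (g a) (g b) ≤ G.dist a b := by
  by_cases hr : G.Reachable a b
  · obtain ⟨p, hp⟩ := hr.exists_walk_length_eq_dist
    calc G.dist (g a) (g b) ≤ (p.map g.toHom).length := SimpleGraph.dist_le _
      _ = p.length := SimpleGraph.Walk.length_map _ _
      _ = G.dist a b := hp
  · rw [SimpleGraph.dist_eq_zero_of_not_reachable hr,
        SimpleGraph.dist_eq_zero_of_not_reachable]
    intro hr2
    have h2 := hr2.map g.symm.toHom
    have e1 : g.symm.toHom (g a) = a := g.symm_apply_apply a
    have e2 : g.symm.toHom (g b) = b := g.symm_apply_apply b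
    rw [e1, e2] at h2
    exact hr h2

lemma aux_iso_dist {V : Type*} {G : SimpleGraph V} (g : G ≃g G) (a b : V) :
    G.dist (g a) (g b) = G.dist a b := by
  refine le_antisymm (aux_iso_dist_le g a b) ?_
  have := aux_iso_dist_le g.symm (g a) (g b)
  simpa using this

lemma aux_exists_parent {V : Type*} (R : RootedGraph V) {n : ℕ} {v : V}
    (hv : v ∈ R.sphere (n+1)) : ∃ u, u ∈ R.sphere n ∧ R.G.Adj u v := by
  have hd : R.G.dist R.o v = n + 1 := hv
  obtain ⟨p, hp⟩ := R.connected.exists_walk_length_eq_dist R.o v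
  have hql : p.reverse.length = n + 1 := by rw [SimpleGraph.Walk.length_reverse, hp, hd]
  cases hq : p.reverse with
  | nil => rw [hq] at hql; simp at hql
  | @cons _ u _ h q' =>
    rw [hq] at hql
    simp [SimpleGraph.Walk.length_cons] at hql
    have hle : R.G.dist R.o u ≤ n := by
      have := SimpleGraph.dist_le q'.reverse
      rwa [SimpleGraph.Walk.length_reverse, hql] at this
    have hge : n ≤ R.G.dist R.o u := by
      by_contra hlt
      push_neg at hlt
      obtain ⟨w, hw⟩ := R.connected.exists_walk_length_eq_dist R.o u
      have : R.G.dist R.o v ≤ (w.concat h.symm).length := SimpleGraph.dist_le _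
      rw [SimpleGraph.Walk.length_concat, hw, hd] at this
      omega
    exact ⟨u, le_antisymm hle hge, h.symm⟩

end Aux

/-- Family preserving rooted graphs are spherically symmetric. -/
theorem stmt0 {V : Type*} (R : RootedGraph V) (hFP : R.FamilyPreserving)
    (n : ℕ) (x y : V) (hx : x ∈ R.sphere n) (hy : y ∈ R.sphere n) :
    ∃ τ : R.G ≃g R.G, τ R.o = R.o ∧ τ x = y := by
  induction n generalizing x y with
  | zero =>
    have hx0 : x = R.o := ((R.connected.dist_eq_zero_iff).mp hx).symm
    have hy0 : y = R.o := ((R.connected.dist_eq_zero_iff).mp hy).symm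
    refine ⟨(SimpleGraph.Iso.refl : R.G ≃g R.G), rfl, ?_⟩
    rw [hx0, hy0]
    rfl
  | succ n ih =>
    obtain ⟨x', hx', hxadj⟩ := aux_exists_parent R hx
    obtain ⟨y', hy', hyadj⟩ := aux_exists_parent R hy
    obtain ⟨τ, hτo, hτx'⟩ := ih x' y' hx' hy'
    have hτxs : τ x ∈ R.sphere (n+1) := by
      have : R.G.dist R.o (τ x) = R.G.dist R.o x := by
        conv_lhs => rw [← hτo]
        exact aux_iso_dist τ R.o x
      show R.G.dist R.o (τ x) = n + 1
      rw [this]; exact hx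
    have hadj : R.G.Adj (τ x) y' := by
      have : R.G.Adj (τ x') (τ x) := τ.map_adj_iff.mpr hxadj
      rw [hτx'] at this
      exact this.symm
    have hsub : y' ∈ R.sphere (n + 1 - 1) := by simpa using hy'
    obtain ⟨σ, hσo, hσx, -⟩ :=
      hFP.2.1 (n+1) (Nat.le_add_left 1 n) (τ x) hτxs y hy y' hsub hadj hyadj.symm
    refine ⟨τ.trans σ, ?_, ?_⟩
    · show σ (τ R.o) = R.o
      rw [hτo, hσo]
    · show σ (τ x) = y
      exact hσx
end

section
/- Let G be a family preserving rooted graph and let x, y ∈ S_n. If there exists a k-forward path from x to y, then there exists a rooted graph automorphism τ of G with τ(x) = y whose restriction to S_{n+k} is the identity. Similarly, if there exists a k-backward path from x to y, then there exists a rooted graph automorphism τ with τ(x) = y whose restriction to S_{n-k} is the identity. -/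
open SimpleGraph Matrix

attribute [local instance] Classical.propDecidable

section Aux

lemma iso_dist_eq {V : Type*} {G : SimpleGraph V} (hc : G.Connected) (f : G ≃g G) (u v : V) :
    G.dist (f u) (f v) = G.dist u v := by
  have key : ∀ (g : G ≃g G) (a b : V), G.dist (g a) (g b) ≤ G.dist a b := by
    intro g a b
    obtain ⟨p, hp⟩ := (hc a b).exists_walk_length_eq_dist
    calc G.dist (g a) (g b) ≤ (p.map g.toHom).length := SimpleGraph.dist_le _
      _ = G.dist a b := by rw [SimpleGraph.Walk.length_map, hp]
  refine le_antisymm (key f u v) ?_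
  have := key f.symm (f u) (f v)
  simpa using this

lemma mapSphere {V : Type*} (R : RootedGraph V) (f : R.G ≃g R.G) (ho : f R.o = R.o)
    {m : ℕ} {v : V} (hv : v ∈ R.sphere m) : f v ∈ R.sphere m := by
  simp only [RootedGraph.sphere, Set.mem_setOf_eq] at *
  rw [← ho, iso_dist_eq R.connected, hv]

lemma forward_aux {V : Type*} (R : RootedGraph V) (hFP : R.FamilyPreserving) :
    ∀ k n (x y : V), x ∈ R.sphere n → y ∈ R.sphere n →
    (∃ p, R.IsForwardPath n k x y p) →
      ∃ τ : R.G ≃g R.G, τ R.o = R.o ∧ τ x = y ∧ ∀ v ∈ R.sphere (n + k), τ v = v := by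
  intro k
  induction k with
  | zero =>
    rintro n x y hx hy ⟨p, h0, hconst, -⟩
    have hxy : x = y := by rw [← h0]; exact hconst 0 (by omega)
    exact ⟨(SimpleGraph.Iso.refl : R.G ≃g R.G), rfl, hxy, fun v _ => rfl⟩
  | succ k ih =>
    rintro n x y hx hy ⟨p, h0, hconst, hadj, hup, hdown⟩
    set p' : ℕ → V := fun j => p (min (j+1) (2*k+1)) with hp'
    have h1 : p 1 ∈ R.sphere (n+1) := hup 1 (by omega)
    have h21 : p (2*k+1) ∈ R.sphere (n+1) := by
      have := hdown (2*k+1) (by omega) (by omega)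
      rwa [show 2*(k+1) - (2*k+1) = 1 from by omega] at this
    have hfp' : R.IsForwardPath (n+1) k (p 1) (p (2*k+1)) p' := by
      refine ⟨?_, ?_, ?_, ?_, ?_⟩
      · simp [hp']
      · intro j hj
        simp only [hp']
        rw [show min (j+1) (2*k+1) = 2*k+1 from by omega]
      · intro j hj
        simp only [hp']
        rw [show min (j+1) (2*k+1) = j+1 from by omega,
          show min (j+1+1) (2*k+1) = j+1+1 from by omega]
        exact hadj (j+1) (by omega)
      · intro j hj
        simp only [hp']
        rw [show min (j+1) (2*k+1) = j+1 from by omega]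
        have := hup (j+1) (by omega)
        rwa [show n + (j+1) = n+1+j from by omega] at this
      · intro j hjk hj2k
        simp only [hp']
        rw [show min (j+1) (2*k+1) = j+1 from by omega]
        have := hdown (j+1) (by omega) (by omega)
        rwa [show n + (2*(k+1) - (j+1)) = n+1+(2*k-j) from by omega] at this
    obtain ⟨σ, hσo, hσ1, hσfix⟩ := ih (n+1) (p 1) (p (2*k+1)) h1 h21 ⟨p', hfp'⟩
    have hσx : σ x ∈ R.sphere n := mapSphere R σ hσo hx
    have hadj1 : R.G.Adj (σ x) (p (2*k+1)) := by
      have h01 := hadj 0 (by omega)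
      rw [h0] at h01
      have : R.G.Adj (σ x) (σ (p 1)) := σ.map_adj_iff.mpr h01
      rwa [hσ1] at this
    have hadjy : R.G.Adj y (p (2*k+1)) := by
      have h := hadj (2*k+1) (by omega)
      rw [hconst (2*k+1+1) (by omega)] at h
      exact h.symm
    obtain ⟨τ, hτo, hτx, hτfix⟩ := hFP.1 n (σ x) hσx y hy (p (2*k+1)) h21 hadj1 hadjy
    refine ⟨σ.trans τ, ?_, ?_, ?_⟩
    · show τ (σ R.o) = R.o
      rw [hσo, hτo]
    · show τ (σ x) = y
      exact hτx
    · intro v hv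
      have hv' := hv
      rw [show n + (k+1) = (n+1) + k from by omega] at hv'
      show τ (σ v) = v
      rw [hσfix v hv']
      exact hτfix (k+1) (by omega) v hv

lemma backward_aux {V : Type*} (R : RootedGraph V) (hFP : R.FamilyPreserving) :
    ∀ k n (x y : V), x ∈ R.sphere n → y ∈ R.sphere n →
    (∃ p, R.IsBackwardPath n k x y p) →
      ∃ τ : R.G ≃g R.G, τ R.o = R.o ∧ τ x = y ∧ ∀ v ∈ R.sphere (n - k), τ v = v := by
  intro k
  induction k with
  | zero =>
    rintro n x y hx hy ⟨p, -, h0, hconst, -⟩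
    have hxy : x = y := by rw [← h0]; exact hconst 0 (by omega)
    exact ⟨(SimpleGraph.Iso.refl : R.G ≃g R.G), rfl, hxy, fun v _ => rfl⟩
  | succ k ih =>
    rintro n x y hx hy ⟨p, hkn, h0, hconst, hadj, hup, hdown⟩
    set p' : ℕ → V := fun j => p (min (j+1) (2*k+1)) with hp'
    have h1 : p 1 ∈ R.sphere (n-1) := hup 1 (by omega)
    have h21 : p (2*k+1) ∈ R.sphere (n-1) := by
      have := hdown (2*k+1) (by omega) (by omega)
      rwa [show 2*(k+1) - (2*k+1) = 1 from by omega] at this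
    have hfp' : R.IsBackwardPath (n-1) k (p 1) (p (2*k+1)) p' := by
      refine ⟨by omega, ?_, ?_, ?_, ?_, ?_⟩
      · simp [hp']
      · intro j hj
        simp only [hp']
        rw [show min (j+1) (2*k+1) = 2*k+1 from by omega]
      · intro j hj
        simp only [hp']
        rw [show min (j+1) (2*k+1) = j+1 from by omega,
          show min (j+1+1) (2*k+1) = j+1+1 from by omega]
        exact hadj (j+1) (by omega)
      · intro j hj
        simp only [hp']
        rw [show min (j+1) (2*k+1) = j+1 from by omega]
        have := hup (j+1) (by omega)
        rwa [show n - (j+1) = n-1-j from by omega] at this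
      · intro j hjk hj2k
        simp only [hp']
        rw [show min (j+1) (2*k+1) = j+1 from by omega]
        have := hdown (j+1) (by omega) (by omega)
        rwa [show n - (2*(k+1) - (j+1)) = n-1-(2*k-j) from by omega] at this
    obtain ⟨σ, hσo, hσ1, hσfix⟩ := ih (n-1) (p 1) (p (2*k+1)) h1 h21 ⟨p', hfp'⟩
    have hσx : σ x ∈ R.sphere n := mapSphere R σ hσo hx
    have hadj1 : R.G.Adj (σ x) (p (2*k+1)) := by
      have h01 := hadj 0 (by omega)
      rw [h0] at h01
      have : R.G.Adj (σ x) (σ (p 1)) := σ.map_adj_iff.mpr h01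
      rwa [hσ1] at this
    have hadjy : R.G.Adj y (p (2*k+1)) := by
      have h := hadj (2*k+1) (by omega)
      rw [hconst (2*k+1+1) (by omega)] at h
      exact h.symm
    obtain ⟨τ, hτo, hτx, hτfix⟩ :=
      hFP.2.1 n (by omega) (σ x) hσx y hy (p (2*k+1)) h21 hadj1 hadjy
    refine ⟨σ.trans τ, ?_, ?_, ?_⟩
    · show τ (σ R.o) = R.o
      rw [hσo, hτo]
    · show τ (σ x) = y
      exact hτx
    · intro v hv
      have hv' := hv
      rw [show n - (k+1) = (n-1) - k from by omega] at hv'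
      show τ (σ v) = v
      rw [hσfix v hv']
      exact hτfix (k+1) (by omega) (by omega) v hv

end Aux

/-- automorphisms moving the endpoints of forward/backward paths. -/
theorem stmt1 {V : Type*} (R : RootedGraph V) (hFP : R.FamilyPreserving)
    (n k : ℕ) (x y : V) (hx : x ∈ R.sphere n) (hy : y ∈ R.sphere n) :
    ((∃ p, R.IsForwardPath n k x y p) →
      ∃ τ : R.G ≃g R.G, τ R.o = R.o ∧ τ x = y ∧ ∀ v ∈ R.sphere (n + k), τ v = v) ∧
    ((∃ p, R.IsBackwardPath n k x y p) →
      ∃ τ : R.G ≃g R.G, τ R.o = R.o ∧ τ x = y ∧ ∀ v ∈ R.sphere (n - k), τ v = v) := by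
  exact ⟨forward_aux R hFP k n x y hx hy, backward_aux R hFP k n x y hx hy⟩
end

section
/- Let G be a family preserving rooted graph, and x, y ∈ S_n such that there exists a k-forward path from x to y. Then there is a bijection between the set of k-forward paths from x to y and the set of k-forward paths from x to itself. -/
open SimpleGraph Matrix

attribute [local instance] Classical.propDecidable

section Aux

variable {V : Type*} (R : RootedGraph V)

namespace RootedGraph

lemma dist_map_aux (φ : R.G ≃g R.G) (u v : V) :
    R.G.dist (φ u) (φ v) = R.G.dist u v := by
  have key : ∀ (ψ : R.G ≃g R.G) (a b : V), R.G.dist (ψ a) (ψ b) ≤ R.G.dist a b := by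
    intro ψ a b
    obtain ⟨w, hw⟩ := R.connected.exists_walk_length_eq_dist a b
    calc R.G.dist (ψ a) (ψ b) ≤ (w.map ψ.toHom).length := SimpleGraph.dist_le _
      _ = R.G.dist a b := by rw [SimpleGraph.Walk.length_map, hw]
  refine le_antisymm (key φ u v) ?_
  have h2 := key φ.symm (φ u) (φ v)
  simpa using h2

lemma sphere_map_aux (φ : R.G ≃g R.G) (hφo : φ R.o = R.o) {m : ℕ} {v : V}
    (hv : v ∈ R.sphere m) : φ v ∈ R.sphere m := by
  have : R.G.dist R.o v = m := hv
  show R.G.dist R.o (φ v) = m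
  rw [← hφo, R.dist_map_aux φ R.o v]
  exact this

/-- The key automorphism: if there is a `k`-forward path from `x` to `y` (with `k ≥ 1`),
there is a rooted automorphism mapping `y` to `x` and fixing all spheres `n+j`, `j ≥ k`,
pointwise. -/
lemma exists_auto_aux (hFP : R.FamilyPreserving) :
    ∀ k : ℕ, 1 ≤ k → ∀ n : ℕ, ∀ x y : V, ∀ p : ℕ → V, R.IsForwardPath n k x y p →
    ∃ φ : R.G ≃g R.G, φ R.o = R.o ∧ φ y = x ∧
      ∀ j : ℕ, k ≤ j → ∀ v ∈ R.sphere (n + j), φ v = v := by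
  intro k
  induction k with
  | zero => omega
  | succ k IH =>
    intro _ n x y p hp
    obtain ⟨hp0, hpend, hadj, hup, hdown⟩ := hp
    rcases Nat.eq_zero_or_pos k with hk0 | hk1
    · -- base case k+1 = 1 : forward brothers
      subst hk0
      have hx' : x ∈ R.sphere n := by
        have := hup 0 (by omega); rwa [hp0, Nat.add_zero] at this
      have hy' : y ∈ R.sphere n := by
        have := hdown 2 (by omega) (by omega)
        have h2 : p 2 = y := hpend 2 (by omega)
        rw [h2] at this
        simpa using this
      have hz : p 1 ∈ R.sphere (n + 1) := hup 1 (by omega)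
      have haxz : R.G.Adj x (p 1) := by have := hadj 0 (by omega); rwa [hp0] at this
      have hayz : R.G.Adj y (p 1) := by
        have := hadj 1 (by omega)
        have h2 : p 2 = y := hpend 2 (by omega)
        rw [h2] at this
        exact this.symm
      obtain ⟨τ, hτo, hτyx, hτfix⟩ := hFP.1 n y hy' x hx' (p 1) hz hayz haxz
      exact ⟨τ, hτo, hτyx, fun j hj v hv => hτfix j hj v hv⟩
    · -- inductive step : k ≥ 1, path of length 2(k+1)
      -- middle path
      set p' : ℕ → V := fun j => if j ≤ 2*k then p (j+1) else p (2*k+1) with hp'def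
      have hp'path : R.IsForwardPath (n+1) k (p 1) (p (2*k+1)) p' := by
        refine ⟨?_, ?_, ?_, ?_, ?_⟩
        · simp [hp'def]
        · intro j hj
          simp only [hp'def]
          rcases Nat.lt_or_ge (2*k) j with h | h
          · rw [if_neg (by omega)]
          · have hj2 : j = 2*k := by omega
            rw [if_pos (by omega), hj2]
        · intro j hj
          simp only [hp'def]
          rw [if_pos (by omega), if_pos (by omega)]
          exact hadj (j+1) (by omega)
        · intro j hj
          simp only [hp'def]
          rw [if_pos (by omega)]
          have := hup (j+1) (by omega)
          have he : n + (j+1) = n + 1 + j := by omega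
          rwa [he] at this
        · intro j hjk hj2k
          simp only [hp'def]
          rw [if_pos (by omega)]
          have := hdown (j+1) (by omega) (by omega)
          have he : n + (2*(k+1) - (j+1)) = n + 1 + (2*k - j) := by omega
          rwa [he] at this
      obtain ⟨φ', hφ'o, hφ'ba, hφ'fix⟩ := IH hk1 (n+1) (p 1) (p (2*k+1)) p' hp'path
      -- x and φ' y are forward brothers through a = p 1
      have hx' : x ∈ R.sphere n := by
        have := hup 0 (by omega); rwa [hp0, Nat.add_zero] at this
      have hy' : y ∈ R.sphere n := by
        have := hdown (2*(k+1)) (by omega) (by omega)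
        have h2 : p (2*(k+1)) = y := hpend _ le_rfl
        rw [h2] at this
        simpa using this
      have ha : p 1 ∈ R.sphere (n + 1) := hup 1 (by omega)
      have haxa : R.G.Adj x (p 1) := by have := hadj 0 (by omega); rwa [hp0] at this
      have hady : R.G.Adj (p (2*k+1)) y := by
        have := hadj (2*k+1) (by omega)
        have h2 : p (2*k+2) = y := hpend _ (by omega)
        rwa [h2] at this
      have hφ'y : φ' y ∈ R.sphere n := R.sphere_map_aux φ' hφ'o hy'
      have hadjφ'y : R.G.Adj (φ' y) (p 1) := by
        have := φ'.map_rel_iff.mpr hady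
        rw [hφ'ba] at this
        exact this.symm
      obtain ⟨τ, hτo, hτ, hτfix⟩ := hFP.1 n (φ' y) hφ'y x hx' (p 1) ha hadjφ'y haxa
      refine ⟨φ'.trans τ, ?_, ?_, ?_⟩
      · show τ (φ' R.o) = R.o
        rw [hφ'o, hτo]
      · show τ (φ' y) = x
        exact hτ
      · intro j hj v hv
        show τ (φ' v) = v
        obtain ⟨j', rfl⟩ : ∃ j', j = j' + 1 := ⟨j - 1, by omega⟩
        have he : n + (j' + 1) = n + 1 + j' := by omega
        have hφ'v : φ' v = v := hφ'fix j' (by omega) v (by rwa [he] at hv)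
        rw [hφ'v]
        exact hτfix (j'+1) (by omega) v hv

/-- Transporting a forward path by an automorphism fixing the top sphere. -/
lemma forward_path_map_aux (φ : R.G ≃g R.G) (hφo : φ R.o = R.o) (k n : ℕ) (hk : 1 ≤ k)
    (x y y' : V) (hφy : φ y = y') (hfix : ∀ v ∈ R.sphere (n + k), φ v = v)
    (q : ℕ → V) (hq : R.IsForwardPath n k x y q) :
    R.IsForwardPath n k x y' (fun j => if j ≤ k then q j else φ (q j)) := by
  obtain ⟨hq0, hqend, hadj, hup, hdown⟩ := hq
  refine ⟨?_, ?_, ?_, ?_, ?_⟩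
  · simp only [if_pos (Nat.zero_le k)]; exact hq0
  · intro j hj
    dsimp only
    rw [if_neg (by omega), hqend j hj, hφy]
  · intro j hj
    dsimp only
    have hqk : φ (q k) = q k := hfix (q k) (hup k le_rfl)
    rcases Nat.lt_or_ge j k with h | h
    · rcases Nat.lt_or_ge (j+1) (k+1) with h1 | h1
      · rw [if_pos (by omega), if_pos (by omega)]
        exact hadj j hj
      · -- impossible : j < k and j+1 > k
        omega
    · rcases Nat.eq_or_lt_of_le h with rfl | h2
      · rw [if_pos le_rfl, if_neg (by omega)]
        rw [← hqk]
        exact φ.map_rel_iff.mpr (hadj k hj)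
      · rw [if_neg (by omega), if_neg (by omega)]
        exact φ.map_rel_iff.mpr (hadj j hj)
  · intro j hj
    dsimp only
    rw [if_pos hj]
    exact hup j hj
  · intro j hjk hj2k
    dsimp only
    rcases Nat.eq_or_lt_of_le hjk with rfl | h2
    · rw [if_pos le_rfl]
      exact hdown k le_rfl hj2k
    · rw [if_neg (by omega)]
      exact R.sphere_map_aux φ hφo (hdown j hjk hj2k)

end RootedGraph

end Aux

/-- bijection between k-forward paths from x to y and from x to itself. -/
theorem stmt2 {V : Type*} (R : RootedGraph V) (hFP : R.FamilyPreserving)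
    (n k : ℕ) (x y : V) (hx : x ∈ R.sphere n) (hy : y ∈ R.sphere n)
    (hex : ∃ p, R.IsForwardPath n k x y p) :
    Nonempty ({p : ℕ → V // R.IsForwardPath n k x y p} ≃
      {p : ℕ → V // R.IsForwardPath n k x x p}) := by
  rcases Nat.eq_zero_or_pos k with rfl | hk
  · obtain ⟨p, hp0, hpend, _, _, _⟩ := hex
    have hxy : x = y := by rw [← hp0, hpend 0 (by omega)]
    subst hxy
    exact ⟨Equiv.refl _⟩
  · obtain ⟨p, hp⟩ := hex
    obtain ⟨φ, hφo, hφyx, hφfix⟩ := R.exists_auto_aux hFP k hk n x y p hp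
    have hfixk : ∀ v ∈ R.sphere (n + k), φ v = v := fun v hv => hφfix k le_rfl v hv
    have hfixk' : ∀ v ∈ R.sphere (n + k), φ.symm v = v := by
      intro v hv
      have h := congrArg φ.symm (hfixk v hv)
      simpa using h.symm
    have hφsymm : φ.symm x = y := by
      have h := congrArg φ.symm hφyx
      simpa using h.symm
    have hφsymmo : φ.symm R.o = R.o := by
      have h := congrArg φ.symm hφo
      simpa using h.symm
    refine ⟨⟨?_, ?_, ?_, ?_⟩⟩
    · rintro ⟨q, hq⟩
      exact ⟨fun j => if j ≤ k then q j else φ (q j),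
        R.forward_path_map_aux φ hφo k n hk x y x hφyx hfixk q hq⟩
    · rintro ⟨r, hr⟩
      exact ⟨fun j => if j ≤ k then r j else φ.symm (r j),
        R.forward_path_map_aux φ.symm hφsymmo k n hk x x y hφsymm hfixk' r hr⟩
    · rintro ⟨q, hq⟩
      apply Subtype.ext
      funext j
      by_cases h : j ≤ k <;> simp [h]
    · rintro ⟨r, hr⟩
      apply Subtype.ext
      funext j
      by_cases h : j ≤ k <;> simp [h]
end

section
/- Every family preserving rooted graph is path commuting: for all n, all x, y ∈ S_n, and all k, ℓ ≥ 0, the number of (k,ℓ)-forward-backward paths from x to y equals the number of (ℓ,k)-backward-forward paths from x to y, the number of tailed-k-forward paths from x to y equals the number of headed-k-forward paths from x to y, and the number of tailed-k-backward paths from x to y equals the number of headed-k-backward paths from x to y. -/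
open SimpleGraph Matrix

attribute [local instance] Classical.propDecidable

/-! ### Auxiliary development for the proof of Statement 4 -/

namespace RootedGraph

variable {V : Type*} {R : RootedGraph V}

private lemma sph_cast {m m' : ℕ} (h : m = m') {v : V} (hv : v ∈ R.sphere m) :
    v ∈ R.sphere m' := h ▸ hv

lemma dist_map (g : R.G ≃g R.G) (u v : V) : R.G.dist (g u) (g v) = R.G.dist u v := by
  have key : ∀ (g : R.G ≃g R.G) (u v : V), R.G.dist (g u) (g v) ≤ R.G.dist u v := by
    intro g u v
    obtain ⟨w, hw⟩ := (R.connected).exists_walk_length_eq_dist u v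
    calc R.G.dist (g u) (g v) ≤ (w.map g.toHom).length := SimpleGraph.dist_le _
      _ = R.G.dist u v := by rw [SimpleGraph.Walk.length_map, hw]
  refine le_antisymm (key g u v) ?_
  have := key g.symm (g u) (g v)
  simpa using this

lemma mem_sphere_map (g : R.G ≃g R.G) (hg : g R.o = R.o) {m : ℕ} {v : V} :
    g v ∈ R.sphere m ↔ v ∈ R.sphere m := by
  have hd := dist_map g R.o v
  rw [hg] at hd
  simp only [sphere, Set.mem_setOf_eq, hd]

lemma symm_root {g : R.G ≃g R.G} (hg : g R.o = R.o) : g.symm R.o = R.o := by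
  conv_lhs => rw [← hg]
  exact g.symm_apply_apply _

/-! #### Transport of forward/backward paths along root-preserving automorphisms -/

lemma IsForwardPath.map {g : R.G ≃g R.G} (hg : g R.o = R.o)
    {n k : ℕ} {x y : V} {p : ℕ → V} (h : R.IsForwardPath n k x y p) :
    R.IsForwardPath n k (g x) (g y) (fun j => g (p j)) := by
  obtain ⟨h0, h1, h2, h3, h4⟩ := h
  exact ⟨by simp only [h0], fun j hj => by simp only [h1 j hj],
    fun j hj => g.map_adj_iff.mpr (h2 j hj),
    fun j hj => (mem_sphere_map g hg).mpr (h3 j hj),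
    fun j hj hj' => (mem_sphere_map g hg).mpr (h4 j hj hj')⟩

lemma IsBackwardPath.map {g : R.G ≃g R.G} (hg : g R.o = R.o)
    {n l : ℕ} {x y : V} {q : ℕ → V} (h : R.IsBackwardPath n l x y q) :
    R.IsBackwardPath n l (g x) (g y) (fun j => g (q j)) := by
  obtain ⟨hln, h0, h1, h2, h3, h4⟩ := h
  exact ⟨hln, by simp only [h0], fun j hj => by simp only [h1 j hj],
    fun j hj => g.map_adj_iff.mpr (h2 j hj),
    fun j hj => (mem_sphere_map g hg).mpr (h3 j hj),
    fun j hj hj' => (mem_sphere_map g hg).mpr (h4 j hj hj')⟩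

/-- Reversal of a forward path. -/
lemma IsForwardPath.rev {n k : ℕ} {x y : V} {p : ℕ → V} (h : R.IsForwardPath n k x y p) :
    R.IsForwardPath n k y x (fun j => p (2*k - j)) := by
  obtain ⟨h0, h1, h2, h3, h4⟩ := h
  refine ⟨by simpa using h1 (2*k) le_rfl,
    fun j hj => by show p (2*k - j) = x; rw [Nat.sub_eq_zero_of_le hj]; exact h0,
    fun j hj => ?_, fun j hj => ?_, fun j hj hj' => ?_⟩
  · have ha := h2 (2*k - (j+1)) (by omega)
    have e : 2*k - (j+1) + 1 = 2*k - j := by omega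
    rw [e] at ha
    exact ha.symm
  · exact sph_cast (by omega) (h4 (2*k - j) (by omega) (by omega))
  · exact sph_cast (by omega) (h3 (2*k - j) (by omega))

/-- Reversal of a backward path. -/
lemma IsBackwardPath.rev {n l : ℕ} {x y : V} {q : ℕ → V} (h : R.IsBackwardPath n l x y q) :
    R.IsBackwardPath n l y x (fun j => q (2*l - j)) := by
  obtain ⟨hln, h0, h1, h2, h3, h4⟩ := h
  refine ⟨hln, by simpa using h1 (2*l) le_rfl,
    fun j hj => by show q (2*l - j) = x; rw [Nat.sub_eq_zero_of_le hj]; exact h0,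
    fun j hj => ?_, fun j hj => ?_, fun j hj hj' => ?_⟩
  · have ha := h2 (2*l - (j+1)) (by omega)
    have e : 2*l - (j+1) + 1 = 2*l - j := by omega
    rw [e] at ha
    exact ha.symm
  · exact sph_cast (by omega) (h4 (2*l - j) (by omega) (by omega))
  · exact sph_cast (by omega) (h3 (2*l - j) (by omega))

/-! #### Half transformations of walks -/

/-- Apply `f` to the first `c` values of `p` (indices `< c`). -/
def hlT (c : ℕ) (f : V → V) (p : ℕ → V) : ℕ → V := fun j => if j < c then f (p j) else p j

/-- Apply `f` to the values of `p` at indices `> c`. -/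
def huT (c : ℕ) (f : V → V) (p : ℕ → V) : ℕ → V := fun j => if c < j then f (p j) else p j

lemma hlT_high {c j : ℕ} (h : c ≤ j) (f : V → V) (p : ℕ → V) : hlT c f p j = p j :=
  if_neg (by omega)

lemma huT_low {c j : ℕ} (h : j ≤ c) (f : V → V) (p : ℕ → V) : huT c f p j = p j :=
  if_neg (by omega)

lemma hlT_low {c j : ℕ} (h : j < c) (f : V → V) (p : ℕ → V) : hlT c f p j = f (p j) :=
  if_pos h

lemma huT_high {c j : ℕ} (h : c < j) (f : V → V) (p : ℕ → V) : huT c f p j = f (p j) :=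
  if_pos h

/-- Change the start of a forward path using an automorphism fixing the top sphere. -/
lemma IsForwardPath.hlT_start {g : R.G ≃g R.G} (hg : g R.o = R.o)
    {n k : ℕ} {x y : V} {p : ℕ → V} (hfix : ∀ v ∈ R.sphere (n+k), g v = v)
    (h : R.IsForwardPath n k x y p) :
    R.IsForwardPath n k (g x) y (hlT k (g : V → V) p) := by
  obtain ⟨h0, h1, h2, h3, h4⟩ := h
  have hpk : (g : V → V) (p k) = p k := hfix _ (h3 k le_rfl)
  refine ⟨?_, fun j hj => ?_, fun j hj => ?_, fun j hj => ?_, fun j hj hj' => ?_⟩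
  · rcases Nat.eq_zero_or_pos k with hk | hk
    · subst hk
      rw [hlT_high (le_refl 0), h0]
      exact (hfix x (sph_cast (by omega) (h0 ▸ h3 0 le_rfl))).symm
    · rw [hlT_low hk, h0]
  · rw [hlT_high (by omega)]
    exact h1 j hj
  · rcases lt_trichotomy (j+1) k with hlt | heq | hgt
    · rw [hlT_low (by omega), hlT_low hlt]
      exact g.map_adj_iff.mpr (h2 j hj)
    · rw [hlT_low (by omega), hlT_high (by omega)]
      have : (g : V → V) (p (j+1)) = p (j+1) := heq ▸ hpk
      rw [← this]
      exact g.map_adj_iff.mpr (h2 j hj)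
    · rw [hlT_high (by omega), hlT_high (by omega)]
      exact h2 j hj
  · by_cases hjk : j < k
    · rw [hlT_low hjk]
      exact (mem_sphere_map g hg).mpr (h3 j hj)
    · rw [hlT_high (by omega)]
      exact h3 j hj
  · rw [hlT_high (by omega)]
    exact h4 j hj hj'

/-- Change the end of a forward path using an automorphism fixing the top sphere. -/
lemma IsForwardPath.huT_end {g : R.G ≃g R.G} (hg : g R.o = R.o)
    {n k : ℕ} {x y : V} {p : ℕ → V} (hfix : ∀ v ∈ R.sphere (n+k), g v = v)
    (h : R.IsForwardPath n k x y p) :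
    R.IsForwardPath n k x (g y) (huT k (g : V → V) p) := by
  obtain ⟨h0, h1, h2, h3, h4⟩ := h
  have hpk : (g : V → V) (p k) = p k := hfix _ (h3 k le_rfl)
  refine ⟨?_, fun j hj => ?_, fun j hj => ?_, fun j hj => ?_, fun j hj hj' => ?_⟩
  · rw [huT_low (Nat.zero_le k)]; exact h0
  · by_cases hk : k < j
    · rw [huT_high hk, h1 j hj]
    · -- then j ≤ k and 2k ≤ j forces k = 0, j = 0
      have hk0 : k = 0 ∧ j = 0 := by omega
      obtain ⟨rfl, rfl⟩ := hk0
      rw [huT_low le_rfl, h1 0 le_rfl]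
      exact (hfix y (sph_cast rfl ((h1 0 le_rfl) ▸ h3 0 le_rfl))).symm
  · rcases lt_trichotomy j k with hlt | heq | hgt
    · rw [huT_low (by omega), huT_low (by omega)]
      exact h2 j hj
    · subst heq
      rw [huT_low le_rfl, huT_high (by omega), ← hpk]
      exact g.map_adj_iff.mpr (h2 j hj)
    · rw [huT_high hgt, huT_high (by omega)]
      exact g.map_adj_iff.mpr (h2 j hj)
  · rw [huT_low hj]
    exact h3 j hj
  · by_cases hkj : k < j
    · rw [huT_high hkj]
      exact (mem_sphere_map g hg).mpr (h4 j hj hj')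
    · rw [huT_low (by omega)]
      exact h4 j hj hj'

/-- Change the start of a backward path using an automorphism fixing the bottom sphere. -/
lemma IsBackwardPath.hlT_start {g : R.G ≃g R.G} (hg : g R.o = R.o)
    {n l : ℕ} {x y : V} {q : ℕ → V} (hfix : ∀ v ∈ R.sphere (n - l), g v = v)
    (h : R.IsBackwardPath n l x y q) :
    R.IsBackwardPath n l (g x) y (hlT l (g : V → V) q) := by
  obtain ⟨hln, h0, h1, h2, h3, h4⟩ := h
  have hpk : (g : V → V) (q l) = q l := hfix _ (h3 l le_rfl)
  refine ⟨hln, ?_, fun j hj => ?_, fun j hj => ?_, fun j hj => ?_, fun j hj hj' => ?_⟩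
  · rcases Nat.eq_zero_or_pos l with hl | hl
    · subst hl
      rw [hlT_high (le_refl 0), h0]
      exact (hfix x (sph_cast rfl (h0 ▸ h3 0 le_rfl))).symm
    · rw [hlT_low hl, h0]
  · rw [hlT_high (by omega)]
    exact h1 j hj
  · rcases lt_trichotomy (j+1) l with hlt | heq | hgt
    · rw [hlT_low (by omega), hlT_low hlt]
      exact g.map_adj_iff.mpr (h2 j hj)
    · rw [hlT_low (by omega), hlT_high (by omega)]
      have : (g : V → V) (q (j+1)) = q (j+1) := heq ▸ hpk
      rw [← this]
      exact g.map_adj_iff.mpr (h2 j hj)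
    · rw [hlT_high (by omega), hlT_high (by omega)]
      exact h2 j hj
  · by_cases hjl : j < l
    · rw [hlT_low hjl]
      exact (mem_sphere_map g hg).mpr (h3 j hj)
    · rw [hlT_high (by omega)]
      exact h3 j hj
  · rw [hlT_high (by omega)]
    exact h4 j hj hj'

/-- Change the end of a backward path using an automorphism fixing the bottom sphere. -/
lemma IsBackwardPath.huT_end {g : R.G ≃g R.G} (hg : g R.o = R.o)
    {n l : ℕ} {x y : V} {q : ℕ → V} (hfix : ∀ v ∈ R.sphere (n - l), g v = v)
    (h : R.IsBackwardPath n l x y q) :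
    R.IsBackwardPath n l x (g y) (huT l (g : V → V) q) := by
  obtain ⟨hln, h0, h1, h2, h3, h4⟩ := h
  have hpk : (g : V → V) (q l) = q l := hfix _ (h3 l le_rfl)
  refine ⟨hln, ?_, fun j hj => ?_, fun j hj => ?_, fun j hj => ?_, fun j hj hj' => ?_⟩
  · rw [huT_low (Nat.zero_le l)]; exact h0
  · by_cases hl : l < j
    · rw [huT_high hl, h1 j hj]
    · have hl0 : l = 0 ∧ j = 0 := by omega
      obtain ⟨rfl, rfl⟩ := hl0
      rw [huT_low le_rfl, h1 0 le_rfl]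
      exact (hfix y (sph_cast rfl ((h1 0 le_rfl) ▸ h3 0 le_rfl))).symm
  · rcases lt_trichotomy j l with hlt | heq | hgt
    · rw [huT_low (by omega), huT_low (by omega)]
      exact h2 j hj
    · subst heq
      rw [huT_low le_rfl, huT_high (by omega), ← hpk]
      exact g.map_adj_iff.mpr (h2 j hj)
    · rw [huT_high hgt, huT_high (by omega)]
      exact g.map_adj_iff.mpr (h2 j hj)
  · rw [huT_low hj]
    exact h3 j hj
  · by_cases hlj : l < j
    · rw [huT_high hlj]
      exact (mem_sphere_map g hg).mpr (h4 j hj hj')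
    · rw [huT_low (by omega)]
      exact h4 j hj hj'

/-! #### Iff versions of the transport lemmas -/

lemma fix_symm {g : R.G ≃g R.G} {m : ℕ} (hfix : ∀ v ∈ R.sphere m, g v = v) :
    ∀ v ∈ R.sphere m, g.symm v = v := fun v hv => by
  conv_lhs => rw [← hfix v hv]
  exact g.symm_apply_apply v

lemma hlT_hlT {c : ℕ} (g : R.G ≃g R.G) (p : ℕ → V) :
    hlT c (g.symm : V → V) (hlT c (g : V → V) p) = p := by
  funext j
  by_cases hj : j < c
  · rw [hlT_low hj, hlT_low hj]; exact g.symm_apply_apply _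
  · rw [hlT_high (by omega), hlT_high (by omega)]

lemma hlT_hlT' {c : ℕ} (g : R.G ≃g R.G) (p : ℕ → V) :
    hlT c (g : V → V) (hlT c (g.symm : V → V) p) = p := by
  funext j
  by_cases hj : j < c
  · rw [hlT_low hj, hlT_low hj]; exact g.apply_symm_apply _
  · rw [hlT_high (by omega), hlT_high (by omega)]

lemma huT_huT {c : ℕ} (g : R.G ≃g R.G) (p : ℕ → V) :
    huT c (g.symm : V → V) (huT c (g : V → V) p) = p := by
  funext j
  by_cases hj : c < j
  · rw [huT_high hj, huT_high hj]; exact g.symm_apply_apply _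
  · rw [huT_low (by omega), huT_low (by omega)]

lemma huT_huT' {c : ℕ} (g : R.G ≃g R.G) (p : ℕ → V) :
    huT c (g : V → V) (huT c (g.symm : V → V) p) = p := by
  funext j
  by_cases hj : c < j
  · rw [huT_high hj, huT_high hj]; exact g.apply_symm_apply _
  · rw [huT_low (by omega), huT_low (by omega)]

lemma isF_hlT_iff (g : R.G ≃g R.G) (hg : g R.o = R.o) {n k : ℕ}
    (hfix : ∀ v ∈ R.sphere (n+k), g v = v) {x w : V} {p : ℕ → V} :
    R.IsForwardPath n k x w p ↔ R.IsForwardPath n k (g x) w (hlT k (g : V → V) p) := by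
  constructor
  · exact fun h => h.hlT_start hg hfix
  · intro h
    have h2 := h.hlT_start (symm_root hg) (fix_symm hfix)
    rwa [g.symm_apply_apply, hlT_hlT] at h2

lemma isF_huT_iff (g : R.G ≃g R.G) (hg : g R.o = R.o) {n k : ℕ}
    (hfix : ∀ v ∈ R.sphere (n+k), g v = v) {x w : V} {p : ℕ → V} :
    R.IsForwardPath n k x w p ↔ R.IsForwardPath n k x (g w) (huT k (g : V → V) p) := by
  constructor
  · exact fun h => h.huT_end hg hfix
  · intro h
    have h2 := h.huT_end (symm_root hg) (fix_symm hfix)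
    rwa [g.symm_apply_apply, huT_huT] at h2

lemma isB_hlT_iff (g : R.G ≃g R.G) (hg : g R.o = R.o) {n l : ℕ}
    (hfix : ∀ v ∈ R.sphere (n - l), g v = v) {x w : V} {q : ℕ → V} :
    R.IsBackwardPath n l x w q ↔ R.IsBackwardPath n l (g x) w (hlT l (g : V → V) q) := by
  constructor
  · exact fun h => h.hlT_start hg hfix
  · intro h
    have h2 := h.hlT_start (symm_root hg) (fix_symm hfix)
    rwa [g.symm_apply_apply, hlT_hlT] at h2

lemma isB_huT_iff (g : R.G ≃g R.G) (hg : g R.o = R.o) {n l : ℕ}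
    (hfix : ∀ v ∈ R.sphere (n - l), g v = v) {x w : V} {q : ℕ → V} :
    R.IsBackwardPath n l x w q ↔ R.IsBackwardPath n l x (g w) (huT l (g : V → V) q) := by
  constructor
  · exact fun h => h.huT_end hg hfix
  · intro h
    have h2 := h.huT_end (symm_root hg) (fix_symm hfix)
    rwa [g.symm_apply_apply, huT_huT] at h2

lemma isF_map_iff (g : R.G ≃g R.G) (hg : g R.o = R.o) {n k : ℕ} {x y : V} {p : ℕ → V} :
    R.IsForwardPath n k x y p ↔ R.IsForwardPath n k (g x) (g y) (fun j => g (p j)) := by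
  constructor
  · exact fun h => h.map hg
  · intro h
    have h2 := h.map (symm_root hg) (g := g.symm)
    simp only [g.symm_apply_apply] at h2
    exact h2

lemma isB_map_iff (g : R.G ≃g R.G) (hg : g R.o = R.o) {n l : ℕ} {x y : V} {q : ℕ → V} :
    R.IsBackwardPath n l x y q ↔ R.IsBackwardPath n l (g x) (g y) (fun j => g (q j)) := by
  constructor
  · exact fun h => h.map hg
  · intro h
    have h2 := h.map (symm_root hg) (g := g.symm)
    simp only [g.symm_apply_apply] at h2
    exact h2

/-! #### Global bijections on walks -/

def hlE (c : ℕ) (g : R.G ≃g R.G) : (ℕ → V) ≃ (ℕ → V) where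
  toFun := hlT c (g : V → V)
  invFun := hlT c (g.symm : V → V)
  left_inv := hlT_hlT g
  right_inv := hlT_hlT' g

def huE (c : ℕ) (g : R.G ≃g R.G) : (ℕ → V) ≃ (ℕ → V) where
  toFun := huT c (g : V → V)
  invFun := huT c (g.symm : V → V)
  left_inv := huT_huT g
  right_inv := huT_huT' g

def compE (g : R.G ≃g R.G) : (ℕ → V) ≃ (ℕ → V) where
  toFun := fun p j => g (p j)
  invFun := fun p j => g.symm (p j)
  left_inv := fun p => funext fun j => g.symm_apply_apply _
  right_inv := fun p => funext fun j => g.apply_symm_apply _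

/-! #### Count-transformation lemmas for fb/bf counts -/

lemma fbCount_hlT (g : R.G ≃g R.G) (hg : g R.o = R.o) {n k l : ℕ} {x y : V}
    (hfix : ∀ v ∈ R.sphere (n+k), g v = v) :
    R.fbCount n k l x y = R.fbCount n k l (g x) y := by
  apply Nat.card_congr
  refine Equiv.subtypeEquiv ((hlE k g).prodCongr (Equiv.refl (ℕ → V))) fun pq => ?_
  show _ ↔ (R.IsForwardPath n k (g x) ((hlT k (g : V → V) pq.1) (2*k)) (hlT k (g : V → V) pq.1) ∧
    R.IsBackwardPath n l ((hlT k (g : V → V) pq.1) (2*k)) y pq.2)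
  rw [hlT_high (by omega : k ≤ 2*k)]
  exact and_congr (isF_hlT_iff g hg hfix) Iff.rfl

lemma fbCount_huT (g : R.G ≃g R.G) (hg : g R.o = R.o) {n k l : ℕ} {x y : V}
    (hfix : ∀ v ∈ R.sphere (n - l), g v = v) :
    R.fbCount n k l x y = R.fbCount n k l x (g y) := by
  apply Nat.card_congr
  refine Equiv.subtypeEquiv ((Equiv.refl (ℕ → V)).prodCongr (huE l g)) fun pq => ?_
  show _ ↔ (R.IsForwardPath n k x (pq.1 (2*k)) pq.1 ∧
    R.IsBackwardPath n l (pq.1 (2*k)) (g y) (huT l (g : V → V) pq.2))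
  exact and_congr Iff.rfl (isB_huT_iff g hg hfix)

lemma bfCount_map (g : R.G ≃g R.G) (hg : g R.o = R.o) {n k l : ℕ} {x y : V} :
    R.bfCount n l k x y = R.bfCount n l k (g x) (g y) := by
  apply Nat.card_congr
  refine Equiv.subtypeEquiv ((compE g).prodCongr (compE g)) fun pq => ?_
  show _ ↔ (R.IsBackwardPath n l (g x) (g (pq.1 (2*l))) (fun j => g (pq.1 j)) ∧
    R.IsForwardPath n k (g (pq.1 (2*l))) (g y) (fun j => g (pq.2 j)))
  exact and_congr (isB_map_iff g hg) (isF_map_iff g hg)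

lemma bfCount_huT (g : R.G ≃g R.G) (hg : g R.o = R.o) {n k l : ℕ} {x y : V}
    (hfix : ∀ v ∈ R.sphere (n+k), g v = v) :
    R.bfCount n l k x y = R.bfCount n l k x (g y) := by
  apply Nat.card_congr
  refine Equiv.subtypeEquiv ((Equiv.refl (ℕ → V)).prodCongr (huE k g)) fun pq => ?_
  show _ ↔ (R.IsBackwardPath n l x (pq.1 (2*l)) pq.1 ∧
    R.IsForwardPath n k (pq.1 (2*l)) (g y) (huT k (g : V → V) pq.2))
  exact and_congr Iff.rfl (isF_huT_iff g hg hfix)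

lemma bfCount_hlT (g : R.G ≃g R.G) (hg : g R.o = R.o) {n k l : ℕ} {x y : V}
    (hfix : ∀ v ∈ R.sphere (n - l), g v = v) :
    R.bfCount n l k x y = R.bfCount n l k (g x) y := by
  apply Nat.card_congr
  refine Equiv.subtypeEquiv ((hlE l g).prodCongr (Equiv.refl (ℕ → V))) fun pq => ?_
  show _ ↔ (R.IsBackwardPath n l (g x) ((hlT l (g : V → V) pq.1) (2*l)) (hlT l (g : V → V) pq.1) ∧
    R.IsForwardPath n k ((hlT l (g : V → V) pq.1) (2*l)) y pq.2)
  rw [hlT_high (by omega : l ≤ 2*l)]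
  exact and_congr (isB_hlT_iff g hg hfix) Iff.rfl

/-! #### Reversal equivalence between fb and bf counts -/

def revT (c : ℕ) (p : ℕ → V) : ℕ → V := fun j => p (c - j)

lemma revT_revT {c : ℕ} {p : ℕ → V} (h : ∀ j, c ≤ j → p j = p c) :
    revT c (revT c p) = p := by
  funext j
  show p (c - (c - j)) = p j
  by_cases hj : j ≤ c
  · rw [Nat.sub_sub_self hj]
  · rw [show c - j = 0 from Nat.sub_eq_zero_of_le (by omega), Nat.sub_zero]
    exact (h j (by omega)).symm

lemma fb_to_bf {n k l : ℕ} {x y : V} (s : (ℕ → V) × (ℕ → V))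
    (h : R.IsForwardPath n k x (s.1 (2*k)) s.1 ∧ R.IsBackwardPath n l (s.1 (2*k)) y s.2) :
    R.IsBackwardPath n l y ((revT (2*l) s.2) (2*l)) (revT (2*l) s.2) ∧
    R.IsForwardPath n k ((revT (2*l) s.2) (2*l)) x (revT (2*k) s.1) := by
  obtain ⟨hp, hq⟩ := h
  have e : (revT (2*l) s.2) (2*l) = s.1 (2*k) := by
    show s.2 (2*l - 2*l) = _
    rw [Nat.sub_self]
    exact hq.2.1
  rw [e]
  exact ⟨hq.rev, hp.rev⟩

lemma bf_to_fb {n k l : ℕ} {x y : V} (s : (ℕ → V) × (ℕ → V))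
    (h : R.IsBackwardPath n l y (s.1 (2*l)) s.1 ∧ R.IsForwardPath n k (s.1 (2*l)) x s.2) :
    R.IsForwardPath n k x ((revT (2*k) s.2) (2*k)) (revT (2*k) s.2) ∧
    R.IsBackwardPath n l ((revT (2*k) s.2) (2*k)) y (revT (2*l) s.1) := by
  obtain ⟨hq, hp⟩ := h
  have e : (revT (2*k) s.2) (2*k) = s.1 (2*l) := by
    show s.2 (2*k - 2*k) = _
    rw [Nat.sub_self]
    exact hp.1
  rw [e]
  exact ⟨hp.rev, hq.rev⟩

lemma fbCount_rev {n k l : ℕ} (x y : V) :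
    R.fbCount n k l x y = R.bfCount n l k y x := by
  apply Nat.card_congr
  refine
    { toFun := fun s => ⟨(revT (2*l) s.1.2, revT (2*k) s.1.1), fb_to_bf s.1 s.2⟩
      invFun := fun s => ⟨(revT (2*k) s.1.2, revT (2*l) s.1.1), bf_to_fb s.1 s.2⟩
      left_inv := ?_
      right_inv := ?_ }
  · rintro ⟨⟨p, q⟩, hp, hq⟩
    refine Subtype.ext (Prod.ext ?_ ?_)
    · exact revT_revT hp.2.1
    · exact revT_revT (fun j hj => (hq.2.2.1 j hj).trans (hq.2.2.1 (2*l) le_rfl).symm)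
  · rintro ⟨⟨q, p⟩, hq, hp⟩
    refine Subtype.ext (Prod.ext ?_ ?_)
    · exact revT_revT hq.2.2.1
    · exact revT_revT (fun j hj => (hp.2.1 j hj).trans (hp.2.1 (2*k) le_rfl).symm)

/-! #### Endpoint membership -/

lemma IsForwardPath.start_mem {n k : ℕ} {x y : V} {p : ℕ → V}
    (h : R.IsForwardPath n k x y p) : x ∈ R.sphere n :=
  h.1 ▸ sph_cast (by omega) (h.2.2.2.1 0 (Nat.zero_le _))

lemma IsForwardPath.end_mem {n k : ℕ} {x y : V} {p : ℕ → V}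
    (h : R.IsForwardPath n k x y p) : y ∈ R.sphere n :=
  (h.2.1 (2*k) le_rfl) ▸ sph_cast (by omega) (h.2.2.2.2 (2*k) (by omega) le_rfl)

lemma IsBackwardPath.start_mem {n l : ℕ} {x y : V} {q : ℕ → V}
    (h : R.IsBackwardPath n l x y q) : x ∈ R.sphere n :=
  h.2.1 ▸ sph_cast (by omega) (h.2.2.2.2.1 0 (Nat.zero_le _))

lemma IsBackwardPath.end_mem {n l : ℕ} {x y : V} {q : ℕ → V}
    (h : R.IsBackwardPath n l x y q) : y ∈ R.sphere n :=
  (h.2.2.1 (2*l) le_rfl) ▸ sph_cast (by omega) (h.2.2.2.2.2 (2*l) (by omega) le_rfl)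

/-! #### Count-transformation lemmas for tailed/headed counts -/

lemma tFCount_hlT (g : R.G ≃g R.G) (hg : g R.o = R.o) {n k : ℕ} {x y : V}
    (hfix : ∀ v ∈ R.sphere (n+k), g v = v) :
    R.tailedFCount n k x y = R.tailedFCount n k (g x) y := by
  apply Nat.card_congr
  refine Equiv.subtypeEquiv (hlE k g) fun p => ?_
  show _ ↔ (R.IsForwardPath n k (g x) ((hlT k (g : V → V) p) (2*k)) (hlT k (g : V → V) p) ∧
    R.G.Adj ((hlT k (g : V → V) p) (2*k)) y)
  rw [hlT_high (by omega : k ≤ 2*k)]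
  exact and_congr (isF_hlT_iff g hg hfix) Iff.rfl

lemma tFCount_map (g : R.G ≃g R.G) (hg : g R.o = R.o) {n k : ℕ} {x y : V} :
    R.tailedFCount n k x y = R.tailedFCount n k (g x) (g y) := by
  apply Nat.card_congr
  refine Equiv.subtypeEquiv (compE g) fun p => ?_
  show _ ↔ (R.IsForwardPath n k (g x) (g (p (2*k))) (fun j => g (p j)) ∧
    R.G.Adj (g (p (2*k))) (g y))
  exact and_congr (isF_map_iff g hg) g.map_adj_iff.symm

lemma hFCount_hlT (g : R.G ≃g R.G) (hg : g R.o = R.o) {n k : ℕ} (hk : 1 ≤ k) {x y : V}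
    (hfix : ∀ v ∈ R.sphere (n+k), g v = v) :
    R.headedFCount n k x y = R.headedFCount n k (g x) y := by
  apply Nat.card_congr
  refine Equiv.subtypeEquiv (hlE k g) fun p => ?_
  show _ ↔ (R.G.Adj (g x) ((hlT k (g : V → V) p) 0) ∧
    R.IsForwardPath n k ((hlT k (g : V → V) p) 0) y (hlT k (g : V → V) p))
  rw [hlT_low hk]
  exact and_congr g.map_adj_iff.symm (isF_hlT_iff g hg hfix)

lemma tF_to_hF {n k : ℕ} {x y : V} (p : ℕ → V)
    (h : R.IsForwardPath n k x (p (2*k)) p ∧ R.G.Adj (p (2*k)) y) :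
    R.G.Adj y ((revT (2*k) p) 0) ∧ R.IsForwardPath n k ((revT (2*k) p) 0) x (revT (2*k) p) := by
  have e : (revT (2*k) p) 0 = p (2*k) := by show p (2*k - 0) = p (2*k); rw [Nat.sub_zero]
  rw [e]
  exact ⟨h.2.symm, h.1.rev⟩

lemma hF_to_tF {n k : ℕ} {x y : V} (p : ℕ → V)
    (h : R.G.Adj y (p 0) ∧ R.IsForwardPath n k (p 0) x p) :
    R.IsForwardPath n k x ((revT (2*k) p) (2*k)) (revT (2*k) p) ∧
    R.G.Adj ((revT (2*k) p) (2*k)) y := by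
  have e : (revT (2*k) p) (2*k) = p 0 := by show p (2*k - 2*k) = p 0; rw [Nat.sub_self]
  rw [e]
  exact ⟨h.2.rev, h.1.symm⟩

lemma tFCount_rev {n k : ℕ} (x y : V) :
    R.tailedFCount n k x y = R.headedFCount n k y x := by
  apply Nat.card_congr
  refine
    { toFun := fun s => ⟨revT (2*k) s.1, tF_to_hF s.1 s.2⟩
      invFun := fun s => ⟨revT (2*k) s.1, hF_to_tF s.1 s.2⟩
      left_inv := ?_
      right_inv := ?_ }
  · rintro ⟨p, hp, ha⟩
    exact Subtype.ext (revT_revT hp.2.1)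
  · rintro ⟨p, ha, hp⟩
    exact Subtype.ext (revT_revT (fun j hj => (hp.2.1 j hj).trans (hp.2.1 (2*k) le_rfl).symm))

lemma tBCount_hlT (g : R.G ≃g R.G) (hg : g R.o = R.o) {n k : ℕ} {x y : V}
    (hfix : ∀ v ∈ R.sphere (n - k), g v = v) :
    R.tailedBCount n k x y = R.tailedBCount n k (g x) y := by
  apply Nat.card_congr
  refine Equiv.subtypeEquiv (hlE k g) fun p => ?_
  show _ ↔ (R.IsBackwardPath n k (g x) ((hlT k (g : V → V) p) (2*k)) (hlT k (g : V → V) p) ∧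
    R.G.Adj ((hlT k (g : V → V) p) (2*k)) y)
  rw [hlT_high (by omega : k ≤ 2*k)]
  exact and_congr (isB_hlT_iff g hg hfix) Iff.rfl

lemma tBCount_map (g : R.G ≃g R.G) (hg : g R.o = R.o) {n k : ℕ} {x y : V} :
    R.tailedBCount n k x y = R.tailedBCount n k (g x) (g y) := by
  apply Nat.card_congr
  refine Equiv.subtypeEquiv (compE g) fun p => ?_
  show _ ↔ (R.IsBackwardPath n k (g x) (g (p (2*k))) (fun j => g (p j)) ∧
    R.G.Adj (g (p (2*k))) (g y))
  exact and_congr (isB_map_iff g hg) g.map_adj_iff.symm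

lemma hBCount_hlT (g : R.G ≃g R.G) (hg : g R.o = R.o) {n k : ℕ} (hk : 1 ≤ k) {x y : V}
    (hfix : ∀ v ∈ R.sphere (n - k), g v = v) :
    R.headedBCount n k x y = R.headedBCount n k (g x) y := by
  apply Nat.card_congr
  refine Equiv.subtypeEquiv (hlE k g) fun p => ?_
  show _ ↔ (R.G.Adj (g x) ((hlT k (g : V → V) p) 0) ∧
    R.IsBackwardPath n k ((hlT k (g : V → V) p) 0) y (hlT k (g : V → V) p))
  rw [hlT_low hk]
  exact and_congr g.map_adj_iff.symm (isB_hlT_iff g hg hfix)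

lemma tB_to_hB {n k : ℕ} {x y : V} (p : ℕ → V)
    (h : R.IsBackwardPath n k x (p (2*k)) p ∧ R.G.Adj (p (2*k)) y) :
    R.G.Adj y ((revT (2*k) p) 0) ∧ R.IsBackwardPath n k ((revT (2*k) p) 0) x (revT (2*k) p) := by
  have e : (revT (2*k) p) 0 = p (2*k) := by show p (2*k - 0) = p (2*k); rw [Nat.sub_zero]
  rw [e]
  exact ⟨h.2.symm, h.1.rev⟩

lemma hB_to_tB {n k : ℕ} {x y : V} (p : ℕ → V)
    (h : R.G.Adj y (p 0) ∧ R.IsBackwardPath n k (p 0) x p) :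
    R.IsBackwardPath n k x ((revT (2*k) p) (2*k)) (revT (2*k) p) ∧
    R.G.Adj ((revT (2*k) p) (2*k)) y := by
  have e : (revT (2*k) p) (2*k) = p 0 := by show p (2*k - 2*k) = p 0; rw [Nat.sub_self]
  rw [e]
  exact ⟨h.2.rev, h.1.symm⟩

lemma tBCount_rev {n k : ℕ} (x y : V) :
    R.tailedBCount n k x y = R.headedBCount n k y x := by
  apply Nat.card_congr
  refine
    { toFun := fun s => ⟨revT (2*k) s.1, tB_to_hB s.1 s.2⟩
      invFun := fun s => ⟨revT (2*k) s.1, hB_to_tB s.1 s.2⟩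
      left_inv := ?_
      right_inv := ?_ }
  · rintro ⟨p, hp, ha⟩
    exact Subtype.ext (revT_revT hp.2.2.1)
  · rintro ⟨p, ha, hp⟩
    exact Subtype.ext
      (revT_revT (fun j hj => (hp.2.2.1 j hj).trans (hp.2.2.1 (2*k) le_rfl).symm))

/-! #### The degenerate case `k = 0` of tailed/headed counts -/

lemma tFCount_zero {n : ℕ} {x y : V} (hx : x ∈ R.sphere n) (hy : y ∈ R.sphere n) :
    R.tailedFCount n 0 x y = R.headedFCount n 0 x y := by
  apply Nat.card_congr
  refine
    { toFun := fun s => ⟨fun _ => y, ?_⟩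
      invFun := fun s => ⟨fun _ => x, ?_⟩
      left_inv := ?_
      right_inv := ?_ }
  · obtain ⟨p, hp, ha⟩ := s
    have hxy : R.G.Adj x y := by rw [← hp.1]; exact ha
    exact ⟨hxy, rfl, fun j hj => rfl, fun j hj => absurd hj (by omega),
      fun j hj => sph_cast (by omega) hy, fun j hj hj' => sph_cast (by omega) hy⟩
  · obtain ⟨p, ha, hp⟩ := s
    have hxy : R.G.Adj x y := by rw [← hp.2.1 0 (by omega)]; exact ha
    exact ⟨⟨rfl, fun j hj => rfl, fun j hj => absurd hj (by omega),
      fun j hj => sph_cast (by omega) hx, fun j hj hj' => sph_cast (by omega) hx⟩, hxy⟩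
  · rintro ⟨p, hp, ha⟩
    apply Subtype.ext
    funext j
    exact ((hp.2.1 j (by omega)).trans hp.1).symm
  · rintro ⟨p, ha, hp⟩
    apply Subtype.ext
    funext j
    exact (hp.2.1 j (by omega)).symm

lemma tBCount_zero {n : ℕ} {x y : V} (hx : x ∈ R.sphere n) (hy : y ∈ R.sphere n) :
    R.tailedBCount n 0 x y = R.headedBCount n 0 x y := by
  apply Nat.card_congr
  refine
    { toFun := fun s => ⟨fun _ => y, ?_⟩
      invFun := fun s => ⟨fun _ => x, ?_⟩
      left_inv := ?_
      right_inv := ?_ }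
  · obtain ⟨p, hp, ha⟩ := s
    have hxy : R.G.Adj x y := by rw [← hp.2.1]; exact ha
    exact ⟨hxy, Nat.zero_le n, rfl, fun j hj => rfl, fun j hj => absurd hj (by omega),
      fun j hj => sph_cast (by omega) hy, fun j hj hj' => sph_cast (by omega) hy⟩
  · obtain ⟨p, ha, hp⟩ := s
    have hxy : R.G.Adj x y := by rw [← hp.2.2.1 0 (by omega)]; exact ha
    exact ⟨⟨Nat.zero_le n, rfl, fun j hj => rfl, fun j hj => absurd hj (by omega),
      fun j hj => sph_cast (by omega) hx, fun j hj hj' => sph_cast (by omega) hx⟩, hxy⟩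
  · rintro ⟨p, hp, ha⟩
    apply Subtype.ext
    funext j
    exact ((hp.2.2.1 j (by omega)).trans hp.2.1).symm
  · rintro ⟨p, ha, hp⟩
    apply Subtype.ext
    funext j
    exact (hp.2.2.1 j (by omega)).symm

/-! #### Extraction of the inner walk -/

lemma IsForwardPath.inner {n k : ℕ} {x z : V} {p : ℕ → V}
    (h : R.IsForwardPath n (k+1) x z p) :
    R.IsForwardPath (n+1) k (p 1) (p (2*k+1))
      (fun j => if j ≤ 2*k then p (j+1) else p (2*k+1)) := by
  obtain ⟨h0, h1, h2, h3, h4⟩ := h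
  refine ⟨?_, fun j hj => ?_, fun j hj => ?_, fun j hj => ?_, fun j hj hj' => ?_⟩
  · show (if 0 ≤ 2*k then p 1 else p (2*k+1)) = p 1
    rw [if_pos (Nat.zero_le _)]
  · show (if j ≤ 2*k then p (j+1) else p (2*k+1)) = p (2*k+1)
    by_cases hj2 : j ≤ 2*k
    · rw [if_pos hj2]
      have hje : j = 2*k := by omega
      subst hje
      rfl
    · rw [if_neg hj2]
  · show R.G.Adj (if j ≤ 2*k then p (j+1) else p (2*k+1))
      (if j+1 ≤ 2*k then p (j+1+1) else p (2*k+1))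
    rw [if_pos (by omega), if_pos (by omega)]
    exact h2 (j+1) (by omega)
  · show (if j ≤ 2*k then p (j+1) else p (2*k+1)) ∈ R.sphere (n + 1 + j)
    rw [if_pos (by omega)]
    exact sph_cast (by omega) (h3 (j+1) (by omega))
  · show (if j ≤ 2*k then p (j+1) else p (2*k+1)) ∈ R.sphere (n + 1 + (2*k - j))
    rw [if_pos (by omega)]
    exact sph_cast (by omega) (h4 (j+1) (by omega) (by omega))

lemma IsBackwardPath.inner {n l : ℕ} {x z : V} {q : ℕ → V}
    (h : R.IsBackwardPath n (l+1) x z q) :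
    R.IsBackwardPath (n-1) l (q 1) (q (2*l+1))
      (fun j => if j ≤ 2*l then q (j+1) else q (2*l+1)) := by
  obtain ⟨hln, h0, h1, h2, h3, h4⟩ := h
  refine ⟨by omega, ?_, fun j hj => ?_, fun j hj => ?_, fun j hj => ?_, fun j hj hj' => ?_⟩
  · show (if 0 ≤ 2*l then q 1 else q (2*l+1)) = q 1
    rw [if_pos (Nat.zero_le _)]
  · show (if j ≤ 2*l then q (j+1) else q (2*l+1)) = q (2*l+1)
    by_cases hj2 : j ≤ 2*l
    · rw [if_pos hj2]
      have hje : j = 2*l := by omega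
      subst hje
      rfl
    · rw [if_neg hj2]
  · show R.G.Adj (if j ≤ 2*l then q (j+1) else q (2*l+1))
      (if j+1 ≤ 2*l then q (j+1+1) else q (2*l+1))
    rw [if_pos (by omega), if_pos (by omega)]
    exact h2 (j+1) (by omega)
  · show (if j ≤ 2*l then q (j+1) else q (2*l+1)) ∈ R.sphere (n - 1 - j)
    rw [if_pos (by omega)]
    exact sph_cast (by omega) (h3 (j+1) (by omega))
  · show (if j ≤ 2*l then q (j+1) else q (2*l+1)) ∈ R.sphere (n - 1 - (2*l - j))
    rw [if_pos (by omega)]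
    exact sph_cast (by omega) (h4 (j+1) (by omega) (by omega))

/-! #### Construction of automorphisms from walks (the key use of family preservation) -/

lemma claimF (hFP : R.FamilyPreserving) :
    ∀ k, 1 ≤ k → ∀ n, ∀ x z : V, ∀ p : ℕ → V, R.IsForwardPath n k x z p →
      ∃ σ : R.G ≃g R.G, σ R.o = R.o ∧ σ x = z ∧
        ∀ m, n + k ≤ m → ∀ v ∈ R.sphere m, σ v = v := by
  intro k
  induction k with
  | zero => exact fun h => absurd h (by omega)
  | succ k ih =>
    intro _ n x z p hp
    rcases Nat.eq_zero_or_pos k with rfl | hk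
    · -- base case k + 1 = 1
      have h1 := hp.2.1
      have h2 := hp.2.2.1
      have h3 := hp.2.2.2.1
      have hx : x ∈ R.sphere n := hp.start_mem
      have hz : z ∈ R.sphere n := hp.end_mem
      have hmid : p 1 ∈ R.sphere (n+1) := h3 1 (by omega)
      have ha1 : R.G.Adj x (p 1) := by rw [← hp.1]; exact h2 0 (by omega)
      have ha2 : R.G.Adj z (p 1) := by
        have hadj := h2 1 (by omega)
        have e : p (1+1) = z := h1 (1+1) (by omega)
        rw [e] at hadj
        exact hadj.symm
      obtain ⟨τ, hτo, hτx, hτfix⟩ := hFP.1 n x hx z hz (p 1) hmid ha1 ha2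
      exact ⟨τ, hτo, hτx, fun m hm v hv =>
        hτfix (m - n) (by omega) v (sph_cast (by omega) hv)⟩
    · -- inductive step
      obtain ⟨σ', hσ'o, hσ'x, hσ'fix⟩ := ih hk (n+1) (p 1) (p (2*k+1)) _ hp.inner
      have hx : x ∈ R.sphere n := hp.start_mem
      have hz : z ∈ R.sphere n := hp.end_mem
      have hσ'xmem : σ' x ∈ R.sphere n := (mem_sphere_map σ' hσ'o).mpr hx
      have hmid : p (2*k+1) ∈ R.sphere (n+1) :=
        sph_cast (by omega) (hp.2.2.2.2 (2*k+1) (by omega) (by omega))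
      have ha1 : R.G.Adj (σ' x) (p (2*k+1)) := by
        have hax : R.G.Adj x (p 1) := by rw [← hp.1]; exact hp.2.2.1 0 (by omega)
        have hmap := σ'.map_adj_iff.mpr hax
        rwa [hσ'x] at hmap
      have ha2 : R.G.Adj z (p (2*k+1)) := by
        have hadj := hp.2.2.1 (2*k+1) (by omega)
        have e : p (2*k+1+1) = z := hp.2.1 (2*k+1+1) (by omega)
        rw [e] at hadj
        exact hadj.symm
      obtain ⟨τ, hτo, hτx, hτfix⟩ := hFP.1 n (σ' x) hσ'xmem z hz (p (2*k+1)) hmid ha1 ha2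
      refine ⟨σ'.trans τ, ?_, ?_, fun m hm v hv => ?_⟩
      · show τ (σ' R.o) = R.o
        rw [hσ'o, hτo]
      · show τ (σ' x) = z
        exact hτx
      · show τ (σ' v) = v
        rw [hσ'fix m (by omega) v hv]
        exact hτfix (m - n) (by omega) v (sph_cast (by omega) hv)

lemma claimB (hFP : R.FamilyPreserving) :
    ∀ l, 1 ≤ l → ∀ n, ∀ x z : V, ∀ q : ℕ → V, R.IsBackwardPath n l x z q →
      ∃ ρ : R.G ≃g R.G, ρ R.o = R.o ∧ ρ x = z ∧
        ∀ m, m ≤ n - l → ∀ v ∈ R.sphere m, ρ v = v := by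
  intro l
  induction l with
  | zero => exact fun h => absurd h (by omega)
  | succ l ih =>
    intro _ n x z q hq
    have hn : l + 1 ≤ n := hq.1
    rcases Nat.eq_zero_or_pos l with rfl | hl
    · -- base case l + 1 = 1
      have h1 := hq.2.2.1
      have h2 := hq.2.2.2.1
      have h3 := hq.2.2.2.2.1
      have hx : x ∈ R.sphere n := hq.start_mem
      have hz : z ∈ R.sphere n := hq.end_mem
      have hmid : q 1 ∈ R.sphere (n-1) := h3 1 (by omega)
      have ha1 : R.G.Adj x (q 1) := by rw [← hq.2.1]; exact h2 0 (by omega)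
      have ha2 : R.G.Adj z (q 1) := by
        have hadj := h2 1 (by omega)
        have e : q (1+1) = z := h1 (1+1) (by omega)
        rw [e] at hadj
        exact hadj.symm
      obtain ⟨τ, hτo, hτx, hτfix⟩ := hFP.2.1 n (by omega) x hx z hz (q 1) hmid ha1 ha2
      exact ⟨τ, hτo, hτx, fun m hm v hv =>
        hτfix (n - m) (by omega) (by omega) v (sph_cast (by omega) hv)⟩
    · -- inductive step
      obtain ⟨ρ', hρ'o, hρ'x, hρ'fix⟩ := ih hl (n-1) (q 1) (q (2*l+1)) _ hq.inner
      have hx : x ∈ R.sphere n := hq.start_mem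
      have hz : z ∈ R.sphere n := hq.end_mem
      have hρ'xmem : ρ' x ∈ R.sphere n := (mem_sphere_map ρ' hρ'o).mpr hx
      have hmid : q (2*l+1) ∈ R.sphere (n-1) :=
        sph_cast (by omega) (hq.2.2.2.2.2 (2*l+1) (by omega) (by omega))
      have ha1 : R.G.Adj (ρ' x) (q (2*l+1)) := by
        have hax : R.G.Adj x (q 1) := by rw [← hq.2.1]; exact hq.2.2.2.1 0 (by omega)
        have hmap := ρ'.map_adj_iff.mpr hax
        rwa [hρ'x] at hmap
      have ha2 : R.G.Adj z (q (2*l+1)) := by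
        have hadj := hq.2.2.2.1 (2*l+1) (by omega)
        have e : q (2*l+1+1) = z := hq.2.2.1 (2*l+1+1) (by omega)
        rw [e] at hadj
        exact hadj.symm
      obtain ⟨τ, hτo, hτx, hτfix⟩ :=
        hFP.2.1 n (by omega) (ρ' x) hρ'xmem z hz (q (2*l+1)) hmid ha1 ha2
      refine ⟨ρ'.trans τ, ?_, ?_, fun m hm v hv => ?_⟩
      · show τ (ρ' R.o) = R.o
        rw [hρ'o, hτo]
      · show τ (ρ' x) = z
        exact hτx
      · show τ (ρ' v) = v
        rw [hρ'fix m (by omega) v hv]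
        exact hτfix (n - m) (by omega) (by omega) v (sph_cast (by omega) hv)

/-! #### Main nonempty-case lemmas -/

lemma fb_main (hFP : R.FamilyPreserving) {n k l : ℕ} {x y : V}
    (hne : Nonempty {pq : (ℕ → V) × (ℕ → V) //
      R.IsForwardPath n k x (pq.1 (2*k)) pq.1 ∧ R.IsBackwardPath n l (pq.1 (2*k)) y pq.2}) :
    R.fbCount n k l x y = R.bfCount n l k x y := by
  obtain ⟨⟨pq, hp, hq⟩⟩ := hne
  obtain ⟨σ, hσo, hσx, hσfix⟩ :
      ∃ σ : R.G ≃g R.G, σ R.o = R.o ∧ σ x = pq.1 (2*k) ∧ ∀ v ∈ R.sphere (n+k), σ v = v := by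
    rcases Nat.eq_zero_or_pos k with rfl | hk
    · exact ⟨RelIso.refl _, rfl, hp.1.symm, fun v _ => rfl⟩
    · obtain ⟨σ, ho, hx', hfx⟩ := claimF hFP k hk n x (pq.1 (2*k)) pq.1 hp
      exact ⟨σ, ho, hx', hfx (n+k) le_rfl⟩
  obtain ⟨ρ, hρo, hρz, hρfix⟩ :
      ∃ ρ : R.G ≃g R.G, ρ R.o = R.o ∧ ρ (pq.1 (2*k)) = y ∧ ∀ v ∈ R.sphere (n - l), ρ v = v := by
    rcases Nat.eq_zero_or_pos l with rfl | hl
    · refine ⟨RelIso.refl _, rfl, ?_, fun v _ => rfl⟩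
      show pq.1 (2*k) = y
      rw [← hq.2.1]
      exact hq.2.2.1 0 (by omega)
    · obtain ⟨ρ, ho, hz', hfx⟩ := claimB hFP l hl n (pq.1 (2*k)) y pq.2 hq
      exact ⟨ρ, ho, hz', hfx (n-l) le_rfl⟩
  have hσo' := symm_root hσo
  have hρo' := symm_root hρo
  have hey : ρ.symm y = pq.1 (2*k) := by rw [← hρz]; exact ρ.symm_apply_apply _
  have e1 : R.fbCount n k l x y = R.fbCount n k l (pq.1 (2*k)) y := by
    have h := fbCount_hlT σ hσo (n := n) (k := k) (l := l) (x := x) (y := y) hσfix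
    rwa [hσx] at h
  have e2 : R.fbCount n k l (pq.1 (2*k)) y = R.fbCount n k l (pq.1 (2*k)) (pq.1 (2*k)) := by
    have h := fbCount_huT ρ.symm hρo' (n := n) (k := k) (l := l) (x := pq.1 (2*k)) (y := y) (fix_symm hρfix)
    rwa [hey] at h
  have f1 : R.bfCount n l k x y = R.bfCount n l k (pq.1 (2*k)) (σ y) := by
    have h := bfCount_map σ hσo (n := n) (k := k) (l := l) (x := x) (y := y)
    rwa [hσx] at h
  have f2 : R.bfCount n l k (pq.1 (2*k)) (σ y) = R.bfCount n l k (pq.1 (2*k)) y := by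
    have h := bfCount_huT σ.symm hσo' (n := n) (k := k) (l := l) (x := pq.1 (2*k)) (y := σ y) (fix_symm hσfix)
    rwa [σ.symm_apply_apply] at h
  have f3 : R.bfCount n l k (pq.1 (2*k)) y = R.bfCount n l k (ρ.symm (pq.1 (2*k))) (pq.1 (2*k)) := by
    have h := bfCount_map ρ.symm hρo' (n := n) (k := k) (l := l) (x := pq.1 (2*k)) (y := y)
    rwa [hey] at h
  have f4 : R.bfCount n l k (ρ.symm (pq.1 (2*k))) (pq.1 (2*k)) =
      R.bfCount n l k (pq.1 (2*k)) (pq.1 (2*k)) := by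
    have h := bfCount_hlT ρ hρo (n := n) (k := k) (l := l) (x := ρ.symm (pq.1 (2*k))) (y := pq.1 (2*k)) hρfix
    rwa [ρ.apply_symm_apply] at h
  rw [e1, e2, fbCount_rev, ← f4, ← f3, ← f2, ← f1]

lemma tF_main (hFP : R.FamilyPreserving) {n k : ℕ} {x y : V} (hy : y ∈ R.sphere n)
    (hne : Nonempty {p : ℕ → V //
      R.IsForwardPath n k x (p (2*k)) p ∧ R.G.Adj (p (2*k)) y}) :
    R.tailedFCount n k x y = R.headedFCount n k x y := by
  obtain ⟨⟨p, hp, ha⟩⟩ := hne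
  rcases Nat.eq_zero_or_pos k with rfl | hk
  · exact tFCount_zero hp.start_mem hy
  · have hz : p (2*k) ∈ R.sphere n := hp.end_mem
    obtain ⟨σ, hσo, hσx, hσfix'⟩ := claimF hFP k hk n x (p (2*k)) p hp
    have hσfix := hσfix' (n+k) le_rfl
    have hσo' := symm_root hσo
    obtain ⟨γ, hγo, hγz, hγy⟩ := hFP.2.2 n (p (2*k)) hz y hy ha
    have e1 : R.tailedFCount n k x y = R.tailedFCount n k (p (2*k)) y := by
      have h := tFCount_hlT σ hσo (n := n) (k := k) (x := x) (y := y) hσfix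
      rwa [hσx] at h
    have e2 : R.tailedFCount n k (p (2*k)) y = R.tailedFCount n k y (p (2*k)) := by
      have h := tFCount_map γ hγo (n := n) (k := k) (x := p (2*k)) (y := y)
      rwa [hγz, hγy] at h
    have e3 : R.tailedFCount n k y (p (2*k)) = R.headedFCount n k (p (2*k)) y :=
      tFCount_rev y (p (2*k))
    have e4 : R.headedFCount n k (p (2*k)) y = R.headedFCount n k x y := by
      have h := hFCount_hlT σ.symm hσo' hk (n := n) (x := p (2*k)) (y := y) (fix_symm hσfix)
      have ex : σ.symm (p (2*k)) = x := by rw [← hσx]; exact σ.symm_apply_apply x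
      rwa [ex] at h
    exact e1.trans (e2.trans (e3.trans e4))

lemma tB_main (hFP : R.FamilyPreserving) {n k : ℕ} {x y : V} (hy : y ∈ R.sphere n)
    (hne : Nonempty {p : ℕ → V //
      R.IsBackwardPath n k x (p (2*k)) p ∧ R.G.Adj (p (2*k)) y}) :
    R.tailedBCount n k x y = R.headedBCount n k x y := by
  obtain ⟨⟨p, hp, ha⟩⟩ := hne
  rcases Nat.eq_zero_or_pos k with rfl | hk
  · exact tBCount_zero hp.start_mem hy
  · have hz : p (2*k) ∈ R.sphere n := hp.end_mem
    obtain ⟨ρ, hρo, hρx, hρfix'⟩ := claimB hFP k hk n x (p (2*k)) p hp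
    have hρfix := hρfix' (n-k) le_rfl
    have hρo' := symm_root hρo
    obtain ⟨γ, hγo, hγz, hγy⟩ := hFP.2.2 n (p (2*k)) hz y hy ha
    have e1 : R.tailedBCount n k x y = R.tailedBCount n k (p (2*k)) y := by
      have h := tBCount_hlT ρ hρo (n := n) (k := k) (x := x) (y := y) hρfix
      rwa [hρx] at h
    have e2 : R.tailedBCount n k (p (2*k)) y = R.tailedBCount n k y (p (2*k)) := by
      have h := tBCount_map γ hγo (n := n) (k := k) (x := p (2*k)) (y := y)
      rwa [hγz, hγy] at h
    have e3 : R.tailedBCount n k y (p (2*k)) = R.headedBCount n k (p (2*k)) y :=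
      tBCount_rev y (p (2*k))
    have e4 : R.headedBCount n k (p (2*k)) y = R.headedBCount n k x y := by
      have h := hBCount_hlT ρ.symm hρo' hk (n := n) (x := p (2*k)) (y := y) (fix_symm hρfix)
      have ex : ρ.symm (p (2*k)) = x := by rw [← hρx]; exact ρ.symm_apply_apply x
      rwa [ex] at h
    exact e1.trans (e2.trans (e3.trans e4))

end RootedGraph

/-- every family preserving rooted graph is path commuting. -/
theorem stmt4 {V : Type*} (R : RootedGraph V) (hFP : R.FamilyPreserving) :
    R.PathCommuting := by
  intro n x hx y hy k l
  refine ⟨?_, ?_, ?_⟩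
  · -- fb = bf
    by_cases h1 : Nonempty {pq : (ℕ → V) × (ℕ → V) //
        R.IsForwardPath n k x (pq.1 (2*k)) pq.1 ∧ R.IsBackwardPath n l (pq.1 (2*k)) y pq.2}
    · exact RootedGraph.fb_main hFP h1
    · have hfb0 : R.fbCount n k l x y = 0 := by
        haveI := not_nonempty_iff.mp h1
        exact Nat.card_of_isEmpty
      by_cases h2 : Nonempty {pq : (ℕ → V) × (ℕ → V) //
          R.IsBackwardPath n l x (pq.1 (2*l)) pq.1 ∧ R.IsForwardPath n k (pq.1 (2*l)) y pq.2}
      · have h3 : Nonempty {pq : (ℕ → V) × (ℕ → V) //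
            R.IsForwardPath n k y (pq.1 (2*k)) pq.1 ∧
            R.IsBackwardPath n l (pq.1 (2*k)) x pq.2} := by
          obtain ⟨⟨s, hs⟩⟩ := h2
          exact ⟨⟨(RootedGraph.revT (2*k) s.2, RootedGraph.revT (2*l) s.1),
            RootedGraph.bf_to_fb (x := y) (y := x) s hs⟩⟩
        have h4 := RootedGraph.fb_main hFP h3
        rw [hfb0, ← RootedGraph.fbCount_rev y x, h4, ← RootedGraph.fbCount_rev x y]
        exact hfb0.symm
      · have hbf0 : R.bfCount n l k x y = 0 := by
          haveI := not_nonempty_iff.mp h2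
          exact Nat.card_of_isEmpty
        rw [hfb0, hbf0]
  · -- tailed F = headed F
    by_cases h1 : Nonempty {p : ℕ → V //
        R.IsForwardPath n k x (p (2*k)) p ∧ R.G.Adj (p (2*k)) y}
    · exact RootedGraph.tF_main hFP hy h1
    · have ht0 : R.tailedFCount n k x y = 0 := by
        haveI := not_nonempty_iff.mp h1
        exact Nat.card_of_isEmpty
      by_cases h2 : Nonempty {p : ℕ → V //
          R.G.Adj x (p 0) ∧ R.IsForwardPath n k (p 0) y p}
      · have h3 : Nonempty {p : ℕ → V //
            R.IsForwardPath n k y (p (2*k)) p ∧ R.G.Adj (p (2*k)) x} := by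
          obtain ⟨⟨p, hs⟩⟩ := h2
          exact ⟨⟨RootedGraph.revT (2*k) p, RootedGraph.hF_to_tF (x := y) (y := x) p hs⟩⟩
        have h4 := RootedGraph.tF_main hFP hx h3
        rw [ht0, ← RootedGraph.tFCount_rev y x, h4, ← RootedGraph.tFCount_rev x y]
        exact ht0.symm
      · have hh0 : R.headedFCount n k x y = 0 := by
          haveI := not_nonempty_iff.mp h2
          exact Nat.card_of_isEmpty
        rw [ht0, hh0]
  · -- tailed B = headed B
    by_cases h1 : Nonempty {p : ℕ → V //
        R.IsBackwardPath n k x (p (2*k)) p ∧ R.G.Adj (p (2*k)) y}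
    · exact RootedGraph.tB_main hFP hy h1
    · have ht0 : R.tailedBCount n k x y = 0 := by
        haveI := not_nonempty_iff.mp h1
        exact Nat.card_of_isEmpty
      by_cases h2 : Nonempty {p : ℕ → V //
          R.G.Adj x (p 0) ∧ R.IsBackwardPath n k (p 0) y p}
      · have h3 : Nonempty {p : ℕ → V //
            R.IsBackwardPath n k y (p (2*k)) p ∧ R.G.Adj (p (2*k)) x} := by
          obtain ⟨⟨p, hs⟩⟩ := h2
          exact ⟨⟨RootedGraph.revT (2*k) p, RootedGraph.hB_to_tB (x := y) (y := x) p hs⟩⟩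
        have h4 := RootedGraph.tB_main hFP hx h3
        rw [ht0, ← RootedGraph.tBCount_rev y x, h4, ← RootedGraph.tBCount_rev x y]
        exact ht0.symm
      · have hh0 : R.headedBCount n k x y = 0 := by
          haveI := not_nonempty_iff.mp h2
          exact Nat.card_of_isEmpty
        rw [ht0, hh0]
end

section
/- A rooted tree is path commuting if and only if it is spherically symmetric (i.e., every vertex in S_n has the same number of forward neighbors in S_{n+1}, for each n). -/
open SimpleGraph Matrix

attribute [local instance] Classical.propDecidable

/-!
In a tree every vertex of `S (n+1)` has exactly one neighbour in `S n`, its parent, and no two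
vertices of a sphere are adjacent. So tailed and headed paths do not exist; a `k`-forward path
from `x` is determined by its apex, a descendant of `x` in `S (n+k)`, and returns to `x`; and an
`ℓ`-backward path from `x` to `y` is unique when it exists. The `(k,ℓ)`- and `(ℓ,k)`-counts are
therefore `D_k(x) B` and `B D_k(y)`, where `D_k` counts descendants `k` generations down and `B`
is the number of `ℓ`-backward paths from `x` to `y`. For `k = 1`, `ℓ = n` the backward path
through the root gives `B = 1`, so path commuting forces equal child counts on each sphere.
Conversely, under spherical symmetry `D_k(x)` is the product of the child counts of the levels
`n, …, n+k-1`, independent of `x`.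
-/

namespace SimpleGraph

variable {V : Type*} {G : SimpleGraph V} {u v : V}

lemma exists_adj_dist_add_one_eq_of_dist_ne_zero (h : G.dist u v ≠ 0) :
    ∃ w, G.Adj v w ∧ G.dist u w + 1 = G.dist u v := by
  obtain ⟨p, hp⟩ := exists_walk_of_dist_ne_zero h
  have hnil : ¬ p.Nil := by rw [← Walk.length_eq_zero_iff]; omega
  have hadj := p.adj_penultimate hnil
  have hle : G.dist u p.penultimate ≤ p.length - 1 :=
    (dist_le p.dropLast).trans_eq p.length_dropLast
  refine ⟨p.penultimate, hadj.symm, ?_⟩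
  rcases hadj.diff_dist_adj (u := u) with h' | h' | h' <;> omega

lemma IsAcyclic.eq_of_adj_of_dist_add_one_eq (ht : G.IsAcyclic) {w₁ w₂ : V}
    (h₁ : G.Adj v w₁) (hd₁ : G.dist u w₁ + 1 = G.dist u v)
    (h₂ : G.Adj v w₂) (hd₂ : G.dist u w₂ + 1 = G.dist u v) : w₁ = w₂ := by
  have hr : G.Reachable u v := Reachable.of_dist_ne_zero (by omega)
  obtain ⟨p₁, hp₁⟩ := (hr.trans h₁.reachable).exists_walk_length_eq_dist
  obtain ⟨p₂, hp₂⟩ := (hr.trans h₂.reachable).exists_walk_length_eq_dist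
  have hq₁ : (p₁.concat h₁.symm).IsPath :=
    Walk.isPath_of_length_eq_dist _ (by rw [Walk.length_concat]; omega)
  have hq₂ : (p₂.concat h₂.symm).IsPath :=
    Walk.isPath_of_length_eq_dist _ (by rw [Walk.length_concat]; omega)
  exact (Walk.concat_inj (congrArg Subtype.val
    ((ht.subsingleton_path u v).elim ⟨_, hq₁⟩ ⟨_, hq₂⟩))).1

end SimpleGraph

namespace RootedGraph

open Finset

variable {V : Type*} {R : RootedGraph V}

variable (R) in
noncomputable def parent (v : V) : V :=
  if h : ∃ u, R.G.Adj v u ∧ R.G.dist R.o u + 1 = R.G.dist R.o v then h.choose else v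

lemma parent_spec {v : V} {m : ℕ} (hv : v ∈ R.sphere (m + 1)) :
    R.G.Adj v (R.parent v) ∧ R.parent v ∈ R.sphere m := by
  have h := exists_adj_dist_add_one_eq_of_dist_ne_zero (G := R.G) (u := R.o)
    (v := v) (by rw [hv]; omega)
  have hv' : R.G.dist R.o v = m + 1 := hv
  rw [parent, dif_pos h]
  obtain ⟨hadj, hd⟩ := h.choose_spec
  exact ⟨hadj, show R.G.dist R.o h.choose = m by omega⟩

lemma parent_eq_of_adj (htree : R.G.IsAcyclic) {u v : V} {m : ℕ} (hv : v ∈ R.sphere (m + 1))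
    (hu : u ∈ R.sphere m) (h : R.G.Adj v u) : R.parent v = u := by
  obtain ⟨hpa, hpm⟩ := parent_spec hv
  have hv' : R.G.dist R.o v = m + 1 := hv
  exact htree.eq_of_adj_of_dist_add_one_eq (u := R.o) hpa (by rw [hpm, hv']) h (by rw [hu, hv'])

lemma parent_iterate_mem {v : V} {m : ℕ} :
    ∀ {k : ℕ}, v ∈ R.sphere (m + k) → R.parent^[k] v ∈ R.sphere m
  | 0, hv => hv
  | k + 1, hv => by
    rw [Function.iterate_succ_apply]
    exact parent_iterate_mem (parent_spec hv).2

lemma parent_iterate_eq_root {v : V} {n : ℕ} (hv : v ∈ R.sphere n) : R.parent^[n] v = R.o :=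
  (R.connected.dist_eq_zero_iff.mp (parent_iterate_mem (m := 0) (by simpa using hv))).symm

lemma not_adj_of_mem_sphere (htree : R.G.IsAcyclic) {u v : V} {n : ℕ} (hu : u ∈ R.sphere n)
    (hv : v ∈ R.sphere n) : ¬ R.G.Adj u v := fun h =>
  htree.dist_ne_of_adj h (R.connected.preconnected R.o u) (hu.trans hv.symm)

lemma adj_parent_iterate_succ {w : V} {m k i : ℕ} (hw : w ∈ R.sphere (m + k)) (hi : i < k) :
    R.G.Adj (R.parent^[i] w) (R.parent^[i + 1] w) := by
  rw [Function.iterate_succ_apply']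
  exact (parent_spec (m := m + (k - i - 1)) (parent_iterate_mem (by convert hw using 2; omega))).1

lemma eq_parent_iterate_of_descends (htree : R.G.IsAcyclic) {m k : ℕ} {p : ℕ → V}
    (hmem : ∀ i ≤ k, p i ∈ R.sphere (m + (k - i)))
    (hadj : ∀ i < k, R.G.Adj (p i) (p (i + 1))) :
    ∀ i ≤ k, p i = R.parent^[i] (p 0)
  | 0, _ => rfl
  | i + 1, hi => by
    rw [Function.iterate_succ_apply', ← eq_parent_iterate_of_descends htree hmem hadj i (by omega)]
    refine (parent_eq_of_adj htree (m := m + (k - (i + 1))) ?_ (hmem (i + 1) hi) (hadj i hi)).symm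
    convert hmem i (by omega) using 2
    omega

variable (R) in
/-- The `k`-forward path with apex `w`: at time `j` it is `|k - j|` generations below `w`,
and it stays at `R.parent^[k] w` after time `2k`. -/
noncomputable def forwardPathOfApex (k : ℕ) (w : V) (j : ℕ) : V :=
  R.parent^[k - j + min (j - k) k] w

lemma forwardPathOfApex_eq_of_eq {k i : ℕ} {w : V} {j : ℕ} (h : k - j + min (j - k) k = i) :
    R.forwardPathOfApex k w j = R.parent^[i] w :=
  congrArg (R.parent^[·] w) h

lemma isForwardPath_forwardPathOfApex {n k : ℕ} {w : V} (hw : w ∈ R.sphere (n + k)) :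
    R.IsForwardPath n k (R.parent^[k] w) (R.parent^[k] w) (R.forwardPathOfApex k w) := by
  refine ⟨forwardPathOfApex_eq_of_eq (by omega),
    fun j hj => forwardPathOfApex_eq_of_eq (by omega), fun j hj => ?_, fun j hj => ?_,
    fun j hj₁ hj₂ => ?_⟩
  · rcases lt_or_ge j k with hjk | hjk
    · rw [forwardPathOfApex_eq_of_eq (i := k - j - 1 + 1) (by omega),
        forwardPathOfApex_eq_of_eq (i := k - j - 1) (by omega)]
      exact (adj_parent_iterate_succ hw (by omega)).symm
    · rw [forwardPathOfApex_eq_of_eq (i := j - k) (by omega),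
        forwardPathOfApex_eq_of_eq (i := j - k + 1) (by omega)]
      exact adj_parent_iterate_succ hw (by omega)
  · rw [forwardPathOfApex_eq_of_eq (i := k - j) (by omega)]
    exact parent_iterate_mem (by convert hw using 2; omega)
  · rw [forwardPathOfApex_eq_of_eq (i := j - k) (by omega)]
    exact parent_iterate_mem (by convert hw using 2; omega)

lemma IsForwardPath.eq_forwardPathOfApex (htree : R.G.IsAcyclic) {n k : ℕ} {x y : V}
    {p : ℕ → V} (hp : R.IsForwardPath n k x y p) : p = R.forwardPathOfApex k (p k) := by
  obtain ⟨-, hy, hadj, hup, hdown⟩ := hp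
  have hclimb : ∀ i ≤ k, p (k - i) = R.parent^[i] (p k) :=
    eq_parent_iterate_of_descends htree (m := n) (p := fun i => p (k - i))
      (fun i hi => hup (k - i) (by omega))
      (fun i hi => by
        simpa [show k - i = k - (i + 1) + 1 by omega] using (hadj (k - (i + 1)) (by omega)).symm)
  have hdescend : ∀ i ≤ k, p (k + i) = R.parent^[i] (p k) :=
    eq_parent_iterate_of_descends htree (m := n) (p := fun i => p (k + i))
      (fun i hi => by convert hdown (k + i) (by omega) (by omega) using 2; omega)
      (fun i hi => hadj (k + i) (by omega))
  funext j
  rcases le_or_gt j k with hjk | hjk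
  · rw [forwardPathOfApex_eq_of_eq (i := k - j) (by omega), ← hclimb (k - j) (by omega)]
    congr 1; omega
  rcases le_or_gt j (2 * k) with hj2k | hj2k
  · rw [forwardPathOfApex_eq_of_eq (i := j - k) (by omega), ← hdescend (j - k) (by omega)]
    congr 1; omega
  · rw [forwardPathOfApex_eq_of_eq (i := k) (by omega), ← hdescend k le_rfl, hy j hj2k.le,
      ← hy (k + k) (by omega)]

lemma IsForwardPath.parent_iterate_apex (htree : R.G.IsAcyclic) {n k : ℕ} {x y : V}
    {p : ℕ → V} (hp : R.IsForwardPath n k x y p) : R.parent^[k] (p k) = x := by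
  rw [← hp.1, congrFun (hp.eq_forwardPathOfApex htree) 0]
  exact (forwardPathOfApex_eq_of_eq (by omega)).symm

lemma IsForwardPath.eq_start (htree : R.G.IsAcyclic) {n k : ℕ} {x y : V} {p : ℕ → V}
    (hp : R.IsForwardPath n k x y p) : y = x := by
  rw [← hp.parent_iterate_apex htree, ← hp.2.1 (2 * k) le_rfl,
    congrFun (hp.eq_forwardPathOfApex htree) (2 * k)]
  exact forwardPathOfApex_eq_of_eq (by omega)

variable (R) in
noncomputable def backwardPath (k : ℕ) (x y : V) (j : ℕ) : V :=
  if j ≤ k then R.parent^[j] x else R.parent^[2 * k - j] y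

lemma IsBackwardPath.eq_backwardPath (htree : R.G.IsAcyclic) {n k : ℕ} {x y : V}
    {p : ℕ → V} (hp : R.IsBackwardPath n k x y p) : p = R.backwardPath k x y := by
  obtain ⟨hkn, h0, hy, hadj, hdown, hup⟩ := hp
  have hfirst : ∀ i ≤ k, p i = R.parent^[i] x := h0 ▸
    eq_parent_iterate_of_descends htree (m := n - k) (p := p)
      (fun i hi => by convert hdown i hi using 2; omega) (fun i hi => hadj i (by omega))
  have hsecond : ∀ i ≤ k, p (2 * k - i) = R.parent^[i] y := hy (2 * k) le_rfl ▸
    eq_parent_iterate_of_descends htree (m := n - k) (p := fun i => p (2 * k - i))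
      (fun i hi => by convert hup (2 * k - i) (by omega) (by omega) using 2; omega)
      (fun i hi => by
        simpa [show 2 * k - i = 2 * k - (i + 1) + 1 by omega]
          using (hadj (2 * k - (i + 1)) (by omega)).symm)
  funext j
  unfold backwardPath
  split_ifs with hjk
  · exact hfirst j hjk
  rcases le_or_gt j (2 * k) with hj2k | hj2k
  · rw [← hsecond (2 * k - j) (by omega)]
    congr 1; omega
  · rw [hy j hj2k.le, show 2 * k - j = 0 by omega]
    rfl

lemma isBackwardPath_backwardPath {n k : ℕ} {x y : V} (hx : x ∈ R.sphere n)
    (hy : y ∈ R.sphere n) (hkn : k ≤ n) (hxy : R.parent^[k] x = R.parent^[k] y) :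
    R.IsBackwardPath n k x y (R.backwardPath k x y) := by
  have hx' : x ∈ R.sphere (n - k + k) := by rwa [Nat.sub_add_cancel hkn]
  have hy' : y ∈ R.sphere (n - k + k) := by rwa [Nat.sub_add_cancel hkn]
  have hsecond : ∀ j, k ≤ j → R.backwardPath k x y j = R.parent^[2 * k - j] y := by
    intro j hj
    unfold backwardPath
    split_ifs with hjk
    · rw [show j = k by omega, hxy, show 2 * k - k = k by omega]
    · rfl
  refine ⟨hkn, if_pos (Nat.zero_le k), fun j hj => ?_, fun j hj => ?_, fun j hj => ?_,
    fun j hj₁ hj₂ => ?_⟩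
  · rw [hsecond j (by omega), show 2 * k - j = 0 by omega]
    rfl
  · rcases lt_or_ge j k with hjk | hjk
    · rw [backwardPath, if_pos hjk.le, backwardPath, if_pos (Nat.succ_le_of_lt hjk)]
      exact adj_parent_iterate_succ hx' hjk
    · rw [hsecond j hjk, hsecond (j + 1) (by omega),
        show 2 * k - j = 2 * k - (j + 1) + 1 by omega]
      exact (adj_parent_iterate_succ hy' (by omega)).symm
  · rw [backwardPath, if_pos hj]
    exact parent_iterate_mem (by convert hx using 2; omega)
  · rw [hsecond j hj₁]
    exact parent_iterate_mem (by convert hy using 2; omega)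

lemma card_backwardPaths_eq_one (htree : R.G.IsAcyclic) {n k : ℕ} {x y : V}
    (hx : x ∈ R.sphere n) (hy : y ∈ R.sphere n) (hkn : k ≤ n)
    (hxy : R.parent^[k] x = R.parent^[k] y) :
    Nat.card {q // R.IsBackwardPath n k x y q} = 1 :=
  Nat.card_eq_one_iff_unique.2
    ⟨⟨fun q q' => Subtype.ext
        ((q.2.eq_backwardPath htree).trans (q'.2.eq_backwardPath htree).symm)⟩,
      ⟨⟨_, isBackwardPath_backwardPath hx hy hkn hxy⟩⟩⟩

lemma fbCount_eq_mul (htree : R.G.IsAcyclic) (n k l : ℕ) (x y : V) :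
    R.fbCount n k l x y =
      Nat.card {p // R.IsForwardPath n k x x p} * Nat.card {q // R.IsBackwardPath n l x y q} := by
  rw [fbCount, ← Nat.card_prod]
  refine Nat.card_congr ((Equiv.subtypeEquivRight fun pq => ?_).trans Equiv.subtypeProdEquivProd)
  constructor
  · rintro ⟨hp, hq⟩
    have hclosed := hp.eq_start htree
    rw [hclosed] at hp hq
    exact ⟨hp, hq⟩
  · rintro ⟨hp, hq⟩
    rw [hp.2.1 (2 * k) le_rfl]
    exact ⟨hp, hq⟩

lemma bfCount_eq_mul (htree : R.G.IsAcyclic) (n l k : ℕ) (x y : V) :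
    R.bfCount n l k x y =
      Nat.card {q // R.IsBackwardPath n l x y q} * Nat.card {p // R.IsForwardPath n k y y p} := by
  rw [bfCount, ← Nat.card_prod]
  refine Nat.card_congr ((Equiv.subtypeEquivRight fun qp => ?_).trans Equiv.subtypeProdEquivProd)
  constructor
  · rintro ⟨hq, hp⟩
    have hclosed := hp.eq_start htree
    rw [← hclosed] at hq hp
    exact ⟨hq, hp⟩
  · rintro ⟨hq, hp⟩
    rw [hq.2.2.1 (2 * l) le_rfl]
    exact ⟨hq, hp⟩

variable (R) in
noncomputable def descendants (n k : ℕ) (x : V) : Finset V :=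
  {w ∈ (R.sphere (n + k)).toFinset | R.parent^[k] w = x}

lemma mem_descendants {n k : ℕ} {x w : V} :
    w ∈ R.descendants n k x ↔ w ∈ R.sphere (n + k) ∧ R.parent^[k] w = x := by
  simp [descendants]

lemma card_forwardPaths (htree : R.G.IsAcyclic) (n k : ℕ) (x : V) :
    Nat.card {p // R.IsForwardPath n k x x p} = #(R.descendants n k x) := by
  rw [← Nat.card_eq_finsetCard]
  refine Nat.card_congr
    { toFun := fun p =>
        ⟨p.1 k, mem_descendants.2 ⟨p.2.2.2.2.1 k le_rfl, p.2.parent_iterate_apex htree⟩⟩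
      invFun := fun w => ⟨R.forwardPathOfApex k w, ?_⟩
      left_inv := fun p => Subtype.ext (p.2.eq_forwardPathOfApex htree).symm
      right_inv := fun w => Subtype.ext (forwardPathOfApex_eq_of_eq (i := 0) (by omega)) }
  obtain ⟨hw, hwx⟩ := mem_descendants.1 w.2
  have hpath := isForwardPath_forwardPathOfApex hw
  rwa [hwx] at hpath

lemma card_descendants_succ (n k : ℕ) (x : V) :
    #(R.descendants n (k + 1) x) = ∑ c ∈ R.descendants n k x, #(R.descendants (n + k) 1 c) := by
  rw [card_eq_sum_card_fiberwise (f := R.parent) fun w hw => ?_]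
  · refine sum_congr rfl fun c hc => congrArg card (ext fun w => ?_)
    obtain ⟨-, hcx⟩ := mem_descendants.1 hc
    simp only [mem_filter, mem_descendants, Function.iterate_succ_apply, Function.iterate_zero,
      id_eq]
    exact ⟨fun ⟨⟨hw, _⟩, hwc⟩ => ⟨hw, hwc⟩, fun ⟨hw, hwc⟩ => ⟨⟨hw, hwc ▸ hcx⟩, hwc⟩⟩
  · obtain ⟨hw, hwx⟩ := mem_descendants.1 hw
    exact mem_descendants.2 ⟨(parent_spec hw).2, hwx⟩

lemma card_descendants_eq_prod {f : ℕ → ℕ}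
    (hf : ∀ m, ∀ c ∈ R.sphere m, #(R.descendants m 1 c) = f m) {n : ℕ} {x : V}
    (hx : x ∈ R.sphere n) : ∀ k, #(R.descendants n k x) = ∏ i ∈ range k, f (n + i)
  | 0 => by
    rw [prod_range_zero, card_eq_one]
    exact ⟨x, ext fun w => by simpa [mem_descendants] using fun h : w = x => h ▸ hx⟩
  | k + 1 => by
    rw [card_descendants_succ, prod_range_succ, ← card_descendants_eq_prod hf hx k, ← smul_eq_mul,
      ← sum_const]
    exact sum_congr rfl fun c hc => hf _ c (mem_descendants.1 hc).1

lemma ncard_children_eq_card_descendants_one (htree : R.G.IsAcyclic) {n : ℕ} {x : V}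
    (hx : x ∈ R.sphere n) :
    {w : V | R.G.Adj x w ∧ w ∈ R.sphere (n + 1)}.ncard = #(R.descendants n 1 x) := by
  rw [← Set.ncard_coe_finset]
  congr 1
  ext w
  simp only [Set.mem_ofPred_eq, mem_coe, mem_descendants, Function.iterate_one]
  exact ⟨fun ⟨hxw, hw⟩ => ⟨hw, parent_eq_of_adj htree hw hx hxw.symm⟩,
    fun ⟨hw, hwx⟩ => ⟨hwx ▸ (parent_spec hw).1.symm, hw⟩⟩

variable {n k : ℕ} {x y : V}

lemma tailedFCount_eq_zero (htree : R.G.IsAcyclic) (hy : y ∈ R.sphere n) :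
    R.tailedFCount n k x y = 0 :=
  Nat.card_eq_zero.2 <| .inl ⟨fun ⟨_, hp, hadj⟩ =>
    not_adj_of_mem_sphere htree (by simpa using hp.2.2.2.2 (2 * k) (by omega) le_rfl) hy hadj⟩

lemma headedFCount_eq_zero (htree : R.G.IsAcyclic) (hx : x ∈ R.sphere n) :
    R.headedFCount n k x y = 0 :=
  Nat.card_eq_zero.2 <| .inl ⟨fun ⟨_, hadj, hp⟩ =>
    not_adj_of_mem_sphere htree hx (by simpa using hp.2.2.2.1 0 (by omega)) hadj⟩

lemma tailedBCount_eq_zero (htree : R.G.IsAcyclic) (hy : y ∈ R.sphere n) :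
    R.tailedBCount n k x y = 0 :=
  Nat.card_eq_zero.2 <| .inl ⟨fun ⟨_, hp, hadj⟩ =>
    not_adj_of_mem_sphere htree (by simpa using hp.2.2.2.2.2 (2 * k) (by omega) le_rfl) hy hadj⟩

lemma headedBCount_eq_zero (htree : R.G.IsAcyclic) (hx : x ∈ R.sphere n) :
    R.headedBCount n k x y = 0 :=
  Nat.card_eq_zero.2 <| .inl ⟨fun ⟨_, hadj, hp⟩ =>
    not_adj_of_mem_sphere htree hx (by simpa using hp.2.2.2.2.1 0 (by omega)) hadj⟩

lemma card_descendants_eq_of_ncard_children_eq (htree : R.G.IsAcyclic)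
    (hsymm : ∀ n : ℕ, ∀ x ∈ R.sphere n, ∀ y ∈ R.sphere n,
      {w : V | R.G.Adj x w ∧ w ∈ R.sphere (n + 1)}.ncard =
      {w : V | R.G.Adj y w ∧ w ∈ R.sphere (n + 1)}.ncard)
    (hx : x ∈ R.sphere n) (hy : y ∈ R.sphere n) (k : ℕ) :
    #(R.descendants n k x) = #(R.descendants n k y) := by
  have hlevel : ∀ m, ∃ a, ∀ c ∈ R.sphere m, #(R.descendants m 1 c) = a := fun m =>
    (R.sphere m).eq_empty_or_nonempty.elim (fun h => ⟨0, by simp [h]⟩) fun ⟨c₀, hc₀⟩ =>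
      ⟨#(R.descendants m 1 c₀), fun c hc => by
        rw [← ncard_children_eq_card_descendants_one htree hc,
          ← ncard_children_eq_card_descendants_one htree hc₀, hsymm m c hc c₀ hc₀]⟩
  choose f hf using hlevel
  rw [card_descendants_eq_prod hf hx, card_descendants_eq_prod hf hy]

end RootedGraph

open RootedGraph in
/-- a rooted tree is path commuting iff it is spherically symmetric
(equal number of forward neighbors across each sphere). -/
theorem stmt5 {V : Type*} (R : RootedGraph V) (htree : R.G.IsAcyclic) :
    R.PathCommuting ↔
    ∀ n : ℕ, ∀ x ∈ R.sphere n, ∀ y ∈ R.sphere n,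
      {w : V | R.G.Adj x w ∧ w ∈ R.sphere (n + 1)}.ncard =
      {w : V | R.G.Adj y w ∧ w ∈ R.sphere (n + 1)}.ncard := by
  constructor
  · intro hpc n x hx y hy
    have hcomm := (hpc n x hx y hy 1 n).1
    rw [fbCount_eq_mul htree, bfCount_eq_mul htree, card_forwardPaths htree,
      card_forwardPaths htree, card_backwardPaths_eq_one htree hx hy le_rfl
        (by rw [parent_iterate_eq_root hx, parent_iterate_eq_root hy])] at hcomm
    rw [ncard_children_eq_card_descendants_one htree hx,
      ncard_children_eq_card_descendants_one htree hy]
    simpa using hcomm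
  · intro hsymm n x hx y hy k l
    refine ⟨?_, ?_, ?_⟩
    · rw [fbCount_eq_mul htree, bfCount_eq_mul htree, card_forwardPaths htree,
        card_forwardPaths htree, card_descendants_eq_of_ncard_children_eq htree hsymm hx hy,
        mul_comm]
    · rw [tailedFCount_eq_zero htree hy, headedFCount_eq_zero htree hx]
    · rw [tailedBCount_eq_zero htree hy, headedBCount_eq_zero htree hx]
end

section
/- Let G(k,γ) be the graph obtained from a spherically symmetric rooted tree T(k) with branching sequence k ∈ ℕ^ℕ by adding, for each n with γ_n = 1, all edges between pairs of vertices in the sphere S_n. Then G(k,γ) is family preserving. -/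
open SimpleGraph Matrix

attribute [local instance] Classical.propDecidable

/-!
In a tree every vertex other than the root has a unique parent, so forward brothers coincide and
the identity serves. For the other two conditions it suffices to exchange two vertices `x`, `y` of
the same sphere by a depth-preserving automorphism of the tree: it preserves the spheres, hence
the added sphere edges, so it is an automorphism of `G(k,γ)` as well (and distances to the root in
`G(k,γ)` are those of the tree, since the new edges stay inside a sphere).

Spherical symmetry lets us label the children of each vertex at depth `t` by `0, …, k (t + 1) - 1`,
so that a vertex is the word of labels along its ancestry. Applying at every depth the
transposition of the labels of the ancestors of `x` and `y` is an involutive automorphism exchanging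
`x` and `y`, and it fixes every vertex not deeper than the point where their ancestries merge.
-/

namespace SimpleGraph

variable {V : Type*} {G : SimpleGraph V} {o u v w x y : V}

def children (G : SimpleGraph V) (o u : V) : Set V :=
  {w | G.Adj u w ∧ G.dist o w = G.dist o u + 1}

theorem exists_adj_dist_add_one (hv : G.dist o v ≠ 0) :
    ∃ u, G.Adj u v ∧ G.dist o u + 1 = G.dist o v := by
  obtain ⟨p, hp⟩ := exists_walk_of_dist_ne_zero hv
  have hnil : ¬ p.Nil := fun h => hv (by rw [← hp, h.length_eq_zero])
  refine ⟨p.penultimate, p.adj_penultimate hnil, ?_⟩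
  have hle := G.dist_le p.dropLast
  have hlen := p.length_dropLast_add_one hnil
  rcases (p.adj_penultimate hnil).diff_dist_adj (u := o) with h | h | h <;> omega

theorem IsTree.eq_of_adj_of_dist_add_one (hT : G.IsTree) {u₁ u₂ : V}
    (h₁ : G.Adj u₁ v) (hd₁ : G.dist o u₁ + 1 = G.dist o v)
    (h₂ : G.Adj u₂ v) (hd₂ : G.dist o u₂ + 1 = G.dist o v) : u₁ = u₂ := by
  have geodesic : ∀ {u} (h : G.Adj u v), G.dist o u + 1 = G.dist o v →
      ∃ p : G.Walk o u, (p.concat h).IsPath := fun h hd => by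
    obtain ⟨p, hp⟩ := hT.connected.exists_walk_length_eq_dist o _
    exact ⟨p, (p.concat h).isPath_of_length_eq_dist (by rw [Walk.length_concat, hp, hd])⟩
  obtain ⟨p₁, hp₁⟩ := geodesic h₁ hd₁
  obtain ⟨p₂, hp₂⟩ := geodesic h₂ hd₂
  have hpath := (hT.isAcyclic.subsingleton_path o v).elim ⟨_, hp₁⟩ ⟨_, hp₂⟩
  exact (Walk.concat_inj (congrArg Subtype.val hpath)).1

noncomputable def parent (G : SimpleGraph V) (o v : V) : V :=
  if h : ∃ u, G.Adj u v ∧ G.dist o u + 1 = G.dist o v then h.choose else v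

theorem parent_spec (hv : G.dist o v ≠ 0) :
    G.Adj (G.parent o v) v ∧ G.dist o (G.parent o v) + 1 = G.dist o v := by
  have h := exists_adj_dist_add_one hv
  rw [parent, dif_pos h]
  exact h.choose_spec

theorem parent_mem_children (hv : G.dist o v ≠ 0) : v ∈ G.children o (G.parent o v) :=
  ⟨(parent_spec hv).1, (parent_spec hv).2.symm⟩

theorem IsTree.parent_eq_of_mem_children (hT : G.IsTree) (h : w ∈ G.children o u) :
    G.parent o w = u :=
  have hs := parent_spec (o := o) (v := w) (by rw [h.2]; omega)
  hT.eq_of_adj_of_dist_add_one hs.1 hs.2 h.1 h.2.symm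

theorem IsTree.map_adj_of_map_parent (hT : G.IsTree) {F : V → V}
    (hdist : ∀ v, G.dist o (F v) = G.dist o v)
    (hparent : ∀ v, G.dist o v ≠ 0 → F (G.parent o v) = G.parent o (F v))
    (h : G.Adj u v) : G.Adj (F u) (F v) := by
  have upward : ∀ {u v}, G.Adj u v → G.dist o v = G.dist o u + 1 → G.Adj (F u) (F v) := by
    intro u v h hd
    rw [← hT.parent_eq_of_mem_children ⟨h, hd⟩, hparent v (by omega)]
    exact (parent_spec (by rw [hdist]; omega)).1
  rcases hT.dist_eq_dist_add_one_of_adj o h with hd | hd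
  · exact (upward h.symm hd).symm
  · exact upward h hd

def Iso.ofInvolutive {F : V → V} (hF : Function.Involutive F)
    (hadj : ∀ u v, G.Adj u v → G.Adj (F u) (F v)) : G ≃g G where
  toEquiv := Function.Involutive.toPerm F hF
  map_rel_iff' {u v} := by
    change G.Adj (F u) (F v) ↔ G.Adj u v
    exact ⟨fun h => by simpa only [hF _] using hadj _ _ h, hadj u v⟩

noncomputable def ancestor (G : SimpleGraph V) (o x : V) (i : ℕ) : V :=
  (G.parent o)^[G.dist o x - i] x

theorem dist_iterate_parent : ∀ c ≤ G.dist o x, G.dist o ((G.parent o)^[c] x) = G.dist o x - c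
  | 0, _ => rfl
  | c + 1, hc => by
    have ih := dist_iterate_parent c (by omega)
    have := (parent_spec (o := o) (v := (G.parent o)^[c] x) (by rw [ih]; omega)).2
    rw [Function.iterate_succ_apply']
    omega

theorem dist_ancestor {i : ℕ} (hi : i ≤ G.dist o x) : G.dist o (G.ancestor o x i) = i := by
  rw [ancestor, dist_iterate_parent _ (Nat.sub_le _ _)]
  omega

theorem ancestor_dist : G.ancestor o x (G.dist o x) = x := by
  rw [ancestor, Nat.sub_self, Function.iterate_zero_apply]

theorem ancestor_dist_sub_one (hx : G.dist o x ≠ 0) :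
    G.ancestor o x (G.dist o x - 1) = G.parent o x := by
  rw [ancestor, Nat.sub_sub_self (by omega), Function.iterate_one]

theorem ancestor_zero (hconn : G.Connected) : G.ancestor o x 0 = o :=
  (hconn.dist_eq_zero_iff.1 (dist_ancestor (Nat.zero_le _))).symm

theorem parent_ancestor_succ {i : ℕ} (hi : i < G.dist o x) :
    G.parent o (G.ancestor o x (i + 1)) = G.ancestor o x i := by
  rw [ancestor, ancestor, ← Function.iterate_succ_apply' (G.parent o)]
  congr 2
  omega

theorem ancestor_succ_mem_children {i : ℕ} (hi : i < G.dist o x) :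
    G.ancestor o x (i + 1) ∈ G.children o (G.ancestor o x i) := by
  rw [← parent_ancestor_succ hi]
  exact parent_mem_children (by rw [dist_ancestor hi]; omega)

theorem ancestor_ancestor {i m : ℕ} (him : i ≤ m) (hm : m ≤ G.dist o x) :
    G.ancestor o (G.ancestor o x m) i = G.ancestor o x i := by
  rw [ancestor, dist_ancestor hm, ancestor, ← Function.iterate_add_apply]
  congr 1
  omega

structure ChildLabelling (G : SimpleGraph V) (o : V) (k : ℕ → ℕ) where
  child : V → ℕ → V
  label : V → ℕ
  child_mem : ∀ u j, j < k (G.dist o u + 1) → child u j ∈ G.children o u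
  label_child : ∀ u j, j < k (G.dist o u + 1) → label (child u j) = j
  label_lt : ∀ u, ∀ v ∈ G.children o u, label v < k (G.dist o u + 1)
  child_label : ∀ u, ∀ v ∈ G.children o u, child u (label v) = v

theorem IsTree.nonempty_childLabelling (hT : G.IsTree) {k : ℕ → ℕ}
    (hfin : ∀ u, (G.children o u).Finite)
    (hcard : ∀ u, (G.children o u).ncard = k (G.dist o u + 1)) :
    Nonempty (G.ChildLabelling o k) := by
  have : Nonempty V := ⟨o⟩
  have hbij : ∀ u, ∃ c : ℕ → V, Set.BijOn c (Set.Iio (k (G.dist o u + 1))) (G.children o u) :=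
    fun u => (Set.finite_Iio _).exists_bijOn_of_encard_eq (by
      rw [← (Set.finite_Iio _).cast_ncard_eq, ← (hfin u).cast_ncard_eq, Set.ncard_Iio_nat,
        hcard])
  choose c hc using hbij
  let label v := Function.invFunOn (c (G.parent o v)) (Set.Iio (k (G.dist o (G.parent o v) + 1))) v
  have hlabel : ∀ u, ∀ v ∈ G.children o u,
      label v = Function.invFunOn (c u) (Set.Iio (k (G.dist o u + 1))) v := by
    intro u v hv
    simp only [label, hT.parent_eq_of_mem_children hv]
  refine ⟨⟨c, label, fun u j hj => (hc u).mapsTo hj, fun u j hj => ?_, fun u v hv => ?_,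
    fun u v hv => ?_⟩⟩
  · rw [hlabel u _ ((hc u).mapsTo hj)]
    exact (hc u).invOn_invFunOn.1 hj
  · rw [hlabel u v hv]
    exact (hc u).surjOn.mapsTo_invFunOn hv
  · rw [hlabel u v hv]
    exact (hc u).invOn_invFunOn.2 hv

namespace ChildLabelling

variable {k : ℕ → ℕ} (L : G.ChildLabelling o k) (π : ℕ → ℕ → ℕ)

theorem label_lt_of_dist_eq {t : ℕ} (hv : G.dist o v = t + 1) : L.label v < k (t + 1) := by
  have h := L.label_lt _ v (parent_mem_children (by omega))
  rwa [(parent_spec (by omega)).2, hv] at h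

noncomputable def relabelAt : ℕ → V → V
  | 0, v => v
  | t + 1, v => L.child (relabelAt t (G.parent o v)) (π t (L.label v))

noncomputable def relabel (v : V) : V := L.relabelAt π (G.dist o v) v

variable {L π}

theorem relabelAt_succ_mem_children (hπk : ∀ t j, j < k (t + 1) → π t j < k (t + 1))
    {t : ℕ} (hv : G.dist o v = t + 1)
    (ih : G.dist o (L.relabelAt π t (G.parent o v)) = t) :
    L.relabelAt π (t + 1) v ∈ G.children o (L.relabelAt π t (G.parent o v)) := by
  exact L.child_mem _ _ (by rw [ih]; exact hπk t _ (L.label_lt_of_dist_eq hv))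

theorem dist_relabelAt (hπk : ∀ t j, j < k (t + 1) → π t j < k (t + 1)) :
    ∀ t v, G.dist o v = t → G.dist o (L.relabelAt π t v) = t
  | 0, _, hv => hv
  | t + 1, v, hv => by
    have hp := parent_spec (G := G) (o := o) (v := v) (by omega)
    have ih := dist_relabelAt hπk t (G.parent o v) (by omega)
    rw [(relabelAt_succ_mem_children hπk hv ih).2, ih]

theorem relabelAt_succ_spec (hT : G.IsTree) (hπk : ∀ t j, j < k (t + 1) → π t j < k (t + 1))
    {t : ℕ} (hv : G.dist o v = t + 1) :
    G.parent o (L.relabelAt π (t + 1) v) = L.relabelAt π t (G.parent o v) ∧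
      L.label (L.relabelAt π (t + 1) v) = π t (L.label v) := by
  have hp := parent_spec (G := G) (o := o) (v := v) (by omega)
  have ih := dist_relabelAt (L := L) hπk t (G.parent o v) (by omega)
  exact ⟨hT.parent_eq_of_mem_children (relabelAt_succ_mem_children hπk hv ih),
    L.label_child _ _ (by rw [ih]; exact hπk t _ (L.label_lt_of_dist_eq hv))⟩

theorem relabelAt_relabelAt (hT : G.IsTree) (hπ : ∀ t, Function.Involutive (π t))
    (hπk : ∀ t j, j < k (t + 1) → π t j < k (t + 1)) :
    ∀ t v, G.dist o v = t → L.relabelAt π t (L.relabelAt π t v) = v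
  | 0, _, _ => rfl
  | t + 1, v, hv => by
    have hp := parent_spec (G := G) (o := o) (v := v) (by omega)
    obtain ⟨hparent, hlabel⟩ := relabelAt_succ_spec hT hπk hv
    rw [relabelAt, hparent, hlabel, relabelAt_relabelAt hT hπ hπk t _ (by omega), hπ,
      L.child_label _ v (parent_mem_children (by omega))]

theorem relabelAt_eq_self {m : ℕ} (hπ : ∀ t < m, ∀ j, π t j = j) :
    ∀ t v, t ≤ m → G.dist o v = t → L.relabelAt π t v = v
  | 0, _, _, _ => rfl
  | t + 1, v, ht, hv => by
    have hp := parent_spec (G := G) (o := o) (v := v) (by omega)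
    rw [relabelAt, relabelAt_eq_self hπ t _ (by omega) (by omega), hπ t (by omega),
      L.child_label _ v (parent_mem_children (by omega))]

theorem relabelAt_ancestor (hconn : G.Connected) (hxy : G.dist o x = G.dist o y)
    (hπ : ∀ t < G.dist o x,
      π t (L.label (G.ancestor o x (t + 1))) = L.label (G.ancestor o y (t + 1))) :
    ∀ i ≤ G.dist o x, L.relabelAt π i (G.ancestor o x i) = G.ancestor o y i
  | 0, _ => by rw [ancestor_zero hconn, ancestor_zero hconn]; rfl
  | i + 1, hi => by
    rw [relabelAt, parent_ancestor_succ hi, relabelAt_ancestor hconn hxy hπ i (by omega),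
      hπ i hi, ← parent_ancestor_succ (x := y) (by omega),
      L.child_label _ _ (parent_mem_children (by rw [dist_ancestor (by omega)]; omega))]

theorem dist_relabel (hπk : ∀ t j, j < k (t + 1) → π t j < k (t + 1)) (v : V) :
    G.dist o (L.relabel π v) = G.dist o v :=
  dist_relabelAt hπk _ v rfl

theorem relabel_involutive (hT : G.IsTree) (hπ : ∀ t, Function.Involutive (π t))
    (hπk : ∀ t j, j < k (t + 1) → π t j < k (t + 1)) : Function.Involutive (L.relabel π) := by
  intro v
  rw [relabel, dist_relabel hπk]
  exact relabelAt_relabelAt hT hπ hπk _ v rfl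

theorem relabel_parent (hT : G.IsTree) (hπk : ∀ t j, j < k (t + 1) → π t j < k (t + 1))
    (hv : G.dist o v ≠ 0) : L.relabel π (G.parent o v) = G.parent o (L.relabel π v) := by
  obtain ⟨t, ht⟩ := Nat.exists_eq_succ_of_ne_zero hv
  have hp := (parent_spec (G := G) (o := o) (v := v) hv).2
  rw [relabel, relabel, ht, (relabelAt_succ_spec hT hπk ht).1]
  congr 1
  omega

theorem relabel_eq_of_label (hconn : G.Connected) (hxy : G.dist o x = G.dist o y)
    (hπ : ∀ t < G.dist o x,
      π t (L.label (G.ancestor o x (t + 1))) = L.label (G.ancestor o y (t + 1))) :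
    L.relabel π x = y := by
  have h := relabelAt_ancestor hconn hxy hπ _ le_rfl
  rw [ancestor_dist] at h
  rw [relabel, h, hxy, ancestor_dist]

theorem relabel_eq_self {m : ℕ} (hπ : ∀ t < m, ∀ j, π t j = j) (hv : G.dist o v ≤ m) :
    L.relabel π v = v :=
  relabelAt_eq_self hπ _ v hv rfl

variable (L)

noncomputable def swapAlong (x y : V) (t : ℕ) : Equiv.Perm ℕ :=
  if t < G.dist o x then
    Equiv.swap (L.label (G.ancestor o x (t + 1))) (L.label (G.ancestor o y (t + 1)))
  else 1

theorem swapAlong_lt (hxy : G.dist o x = G.dist o y) (t j : ℕ) (hj : j < k (t + 1)) :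
    L.swapAlong x y t j < k (t + 1) := by
  unfold swapAlong
  split_ifs with ht
  · have hlabel : ∀ z, G.dist o z = G.dist o x → L.label (G.ancestor o z (t + 1)) < k (t + 1) :=
      fun z hz => L.label_lt_of_dist_eq (dist_ancestor (by omega))
    rw [Equiv.swap_apply_def]
    split_ifs
    exacts [hlabel y hxy.symm, hlabel x rfl, hj]
  · exact hj

theorem swapAlong_eq_self {m : ℕ} (hm : m ≤ G.dist o x)
    (hxy : G.ancestor o x m = G.ancestor o y m) (hdist : G.dist o x = G.dist o y) :
    ∀ t < m, ∀ j, L.swapAlong x y t j = j := by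
  intro t ht j
  have hanc : G.ancestor o x (t + 1) = G.ancestor o y (t + 1) := by
    rw [← ancestor_ancestor ht hm, hxy, ancestor_ancestor ht (hdist ▸ hm)]
  unfold swapAlong
  split_ifs <;> simp [hanc]

theorem swapAlong_involutive (x y : V) (t : ℕ) : Function.Involutive (L.swapAlong x y t) := by
  unfold swapAlong
  split_ifs
  exacts [Equiv.swap_apply_self _ _, fun _ => rfl]

theorem swapAlong_ancestor_left (x y : V) {t : ℕ} (ht : t < G.dist o x) :
    L.swapAlong x y t (L.label (G.ancestor o x (t + 1))) = L.label (G.ancestor o y (t + 1)) := by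
  simp only [swapAlong, if_pos ht, Equiv.swap_apply_left]

theorem swapAlong_ancestor_right (x y : V) {t : ℕ} (ht : t < G.dist o x) :
    L.swapAlong x y t (L.label (G.ancestor o y (t + 1))) = L.label (G.ancestor o x (t + 1)) := by
  simp only [swapAlong, if_pos ht, Equiv.swap_apply_right]

end ChildLabelling

theorem IsTree.exists_iso_swap (hT : G.IsTree) {k : ℕ → ℕ} (L : G.ChildLabelling o k)
    (hxy : G.dist o x = G.dist o y) :
    ∃ τ : G ≃g G, (∀ v, G.dist o (τ v) = G.dist o v) ∧ τ x = y ∧ τ y = x ∧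
      ∀ m ≤ G.dist o x, G.ancestor o x m = G.ancestor o y m →
        ∀ v, G.dist o v ≤ m → τ v = v := by
  set π : ℕ → ℕ → ℕ := fun t => L.swapAlong x y t
  have hπk : ∀ t j, j < k (t + 1) → π t j < k (t + 1) := L.swapAlong_lt hxy
  have hF := L.relabel_involutive hT (L.swapAlong_involutive x y) hπk
  refine ⟨Iso.ofInvolutive hF fun u v => hT.map_adj_of_map_parent (L.dist_relabel hπk)
    fun v => L.relabel_parent hT hπk, L.dist_relabel hπk, ?_, ?_, ?_⟩
  · exact L.relabel_eq_of_label hT.connected hxy fun t ht => L.swapAlong_ancestor_left x y ht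
  · exact L.relabel_eq_of_label hT.connected hxy.symm fun t ht =>
      L.swapAlong_ancestor_right x y (hxy ▸ ht)
  · exact fun m hm hanc v hv => L.relabel_eq_self (L.swapAlong_eq_self hm hanc hxy) hv

def completeSpheres (G : SimpleGraph V) (o : V) (γ : ℕ → Bool) : SimpleGraph V where
  Adj x y := G.Adj x y ∨ (x ≠ y ∧ ∃ n, 1 ≤ n ∧ γ n = true ∧ G.dist o x = n ∧ G.dist o y = n)
  symm := ⟨fun x y => by
    rintro (h | ⟨hne, n, hn, hγ, hx, hy⟩)
    exacts [Or.inl h.symm, Or.inr ⟨hne.symm, n, hn, hγ, hy, hx⟩]⟩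
  loopless := ⟨fun x => by
    rintro (h | ⟨hne, -⟩)
    exacts [G.loopless.irrefl x h, hne rfl]⟩

variable {γ : ℕ → Bool}

theorem completeSpheres_adj : (G.completeSpheres o γ).Adj x y ↔
    G.Adj x y ∨ (x ≠ y ∧ ∃ n, 1 ≤ n ∧ γ n = true ∧ G.dist o x = n ∧ G.dist o y = n) :=
  Iff.rfl

theorem adj_of_completeSpheres_adj (h : (G.completeSpheres o γ).Adj x y)
    (hd : G.dist o x ≠ G.dist o y) : G.Adj x y :=
  (completeSpheres_adj.1 h).resolve_right fun ⟨_, _, _, _, hx, hy⟩ => hd (hx.trans hy.symm)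

theorem dist_completeSpheres (hconn : G.Connected) (v : V) :
    (G.completeSpheres o γ).dist o v = G.dist o v := by
  have hle : G ≤ G.completeSpheres o γ := fun _ _ h => completeSpheres_adj.2 (Or.inl h)
  have lipschitz : ∀ {u w} (p : (G.completeSpheres o γ).Walk u w),
      G.dist o w ≤ G.dist o u + p.length := by
    intro u w p
    induction p with
    | nil => simp
    | cons h _ ih =>
      rw [Walk.length_cons]
      rcases completeSpheres_adj.1 h with h | ⟨-, n, -, -, hx, hy⟩
      · rcases h.diff_dist_adj (u := o) with h | h | h <;> omega
      · omega
  obtain ⟨p, hp⟩ := ((hconn o v).mono hle).exists_walk_length_eq_dist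
  have := lipschitz p
  rw [dist_self] at this
  exact le_antisymm ((hconn o v).dist_anti hle) (by omega)

def Iso.completeSpheres (τ : G ≃g G) (hτ : ∀ v, G.dist o (τ v) = G.dist o v) :
    G.completeSpheres o γ ≃g G.completeSpheres o γ where
  toEquiv := τ.toEquiv
  map_rel_iff' {u v} := by
    change (G.completeSpheres o γ).Adj (τ u) (τ v) ↔ _
    simp only [completeSpheres_adj, τ.map_adj_iff, hτ, ne_eq, EmbeddingLike.apply_eq_iff_eq]

end SimpleGraph

namespace RootedGraph

variable {V : Type*} {R Rp : RootedGraph V} {γ : ℕ → Bool}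

theorem sphere_eq_of_eq_completeSpheres (hG : Rp.G = R.G.completeSpheres R.o γ)
    (ho : Rp.o = R.o) (n : ℕ) : Rp.sphere n = R.sphere n := by
  ext v
  simp only [sphere, Set.mem_ofPred_eq, hG, ho, SimpleGraph.dist_completeSpheres R.connected]

theorem exists_iso_of_eq_completeSpheres (hG : Rp.G = R.G.completeSpheres R.o γ)
    (ho : Rp.o = R.o) (τ : R.G ≃g R.G) (hτ : ∀ v, R.G.dist R.o (τ v) = R.G.dist R.o v) :
    ∃ τ' : Rp.G ≃g Rp.G, τ' Rp.o = Rp.o ∧ ∀ v, τ' v = τ v := by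
  rw [hG, ho]
  refine ⟨τ.completeSpheres hτ, ?_, fun _ => rfl⟩
  exact (R.connected.dist_eq_zero_iff.1 ((hτ R.o).trans SimpleGraph.dist_self)).symm

end RootedGraph

/-- a spherically symmetric tree with some spheres completed is
family preserving. -/
theorem stmt7 {V : Type*} (R Rp : RootedGraph V) (k : ℕ → ℕ) (γ : ℕ → Bool)
    (htree : R.G.IsAcyclic)
    (hbranch : ∀ n : ℕ, ∀ x ∈ R.sphere n,
      {w : V | R.G.Adj x w ∧ w ∈ R.sphere (n + 1)}.ncard = k (n + 1))
    (hroot : Rp.o = R.o)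
    (hadj : ∀ x y : V, Rp.G.Adj x y ↔
      (R.G.Adj x y ∨ (x ≠ y ∧ ∃ n : ℕ, 1 ≤ n ∧ γ n = true ∧
        x ∈ R.sphere n ∧ y ∈ R.sphere n))) :
    Rp.FamilyPreserving := by
  have hT : R.G.IsTree := ⟨R.connected, htree⟩
  obtain ⟨L⟩ := hT.nonempty_childLabelling (k := k)
    (fun u => (R.locFin u).subset fun _ hw => hw.1) (fun u => hbranch _ u rfl)
  have hG : Rp.G = R.G.completeSpheres R.o γ := by
    ext x y
    exact hadj x y
  have hR : ∀ {x y}, Rp.G.Adj x y → R.G.dist R.o x ≠ R.G.dist R.o y → R.G.Adj x y :=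
    fun h => SimpleGraph.adj_of_completeSpheres_adj (hG ▸ h)
  simp only [RootedGraph.FamilyPreserving, RootedGraph.sphere_eq_of_eq_completeSpheres hG hroot]
  refine ⟨?_, ?_, ?_⟩
  · intro n x (hx : R.G.dist R.o x = n) y (hy : _ = n) z (hz : _ = n + 1) hxz hyz
    have hxy : x = y := hT.eq_of_adj_of_dist_add_one (o := R.o) (hR hxz (by omega)) (by omega)
      (hR hyz (by omega)) (by omega)
    exact ⟨SimpleGraph.Iso.refl, rfl, hxy, fun _ _ _ _ => rfl⟩
  · intro n hn x (hx : R.G.dist R.o x = n) y (hy : _ = n) z (hz : _ = n - 1) hxz hyz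
    have hparent : ∀ {w}, R.G.dist R.o w = n → Rp.G.Adj w z → R.G.ancestor R.o w (n - 1) = z :=
      fun hw h => by
        rw [← hw, SimpleGraph.ancestor_dist_sub_one (by omega)]
        exact hT.parent_eq_of_mem_children ⟨(hR h (by omega)).symm, by omega⟩
    obtain ⟨τ, hτd, hτx, -, hτfix⟩ := hT.exists_iso_swap L (hx.trans hy.symm)
    obtain ⟨τ', hτ'o, hτ'⟩ := RootedGraph.exists_iso_of_eq_completeSpheres hG hroot τ hτd
    refine ⟨τ', hτ'o, (hτ' x).trans hτx, fun j hj hjn v (hv : _ = n - j) => ?_⟩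
    rw [hτ', hτfix (n - 1) (by omega) ((hparent hx hxz).trans (hparent hy hyz).symm) v (by omega)]
  · intro n x (hx : R.G.dist R.o x = n) y (hy : _ = n) _
    obtain ⟨τ, hτd, hτx, hτy, -⟩ := hT.exists_iso_swap L (hx.trans hy.symm)
    obtain ⟨τ', hτ'o, hτ'⟩ := RootedGraph.exists_iso_of_eq_completeSpheres hG hroot τ hτd
    exact ⟨τ', hτ'o, (hτ' x).trans hτx, (hτ' y).trans hτy⟩
end
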